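/- arXiv:1704.07028 — 12 statements merged into one kernel-verified Lean document; each statement's English description precedes it below -/
import Mathlib

section
/- Let P be a convex polytope in R^d, and let x be a point in R^d. Suppose there exist points p, q in P with dist(p,q) = diam(P) and angle(p, x, q) = θ > π/2. Let y be a point of P farthest from x, and z a point of P farthest from y. Then dist(y,z) ≥ diam(P) / (2 sin(π/2 − θ/4)). -/
/-!
Let `b = |xy|`, so `|xp|, |xq| ≤ b`. By the triangle inequality for angles at `x`, one of
`∠pxy`, `∠qxy` is at least `θ/2`, say `∠pxy`. The law of cosines in the triangles `pxq` and `pxy`,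
together with `cos (θ/2) ≤ 1/√2`, then gives `|pq| ≤ 2 cos (θ/4) |yp|`, and `|yp| ≤ |yz|` because
`z` is farthest from `y`.
-/

open Real EuclideanGeometry

/-- With `c = cos (θ/2)`, the left side is `|pq|²` by the law of cosines for `∠pxq = θ`, and the
bracket on the right is a lower bound for `|yp|²` when `∠pxy ≥ θ/2`. -/
lemma law_cos_double_angle_le_two_mul_one_add_mul {a₁ a₂ b c : ℝ} (ha₁ : 0 ≤ a₁) (ha₂ : 0 ≤ a₂)
    (ha₁b : a₁ ≤ b) (ha₂b : a₂ ≤ b) (hc : 0 ≤ c) (hc2 : 2 * c ^ 2 - 1 ≤ 0) :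
    a₁ ^ 2 + a₂ ^ 2 - 2 * a₁ * a₂ * (2 * c ^ 2 - 1) ≤
      2 * (1 + c) * (a₁ ^ 2 + b ^ 2 - 2 * a₁ * b * c) := by
  have hsplit : 2 * (1 + c) * (a₁ ^ 2 + b ^ 2 - 2 * a₁ * b * c) -
      (a₁ ^ 2 + a₂ ^ 2 - 2 * a₁ * a₂ * (2 * c ^ 2 - 1)) =
      (1 + 2 * c) * (a₁ - b) ^ 2 + (b - a₂) * (2 * a₁ * (1 - 2 * c ^ 2) + a₂ + b) := by ring
  have h₁ : 0 ≤ (1 + 2 * c) * (a₁ - b) ^ 2 := by positivity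
  have h₂ : 0 ≤ (b - a₂) * (2 * a₁ * (1 - 2 * c ^ 2) + a₂ + b) :=
    mul_nonneg (by linarith) (by nlinarith)
  linarith

section EuclideanAffine

variable {V P : Type*} [NormedAddCommGroup V] [InnerProductSpace ℝ V] [MetricSpace P]
  [NormedAddTorsor V P]

lemma cos_angle_div_four_pos (p x q : P) : 0 < cos (∠ p x q / 4) :=
  cos_pos_of_mem_Ioo
    ⟨by linarith [pi_pos, angle_nonneg p x q], by linarith [pi_pos, angle_le_pi p x q]⟩

lemma dist_le_two_mul_cos_mul_dist_of_half_le_angle {x p q y : P}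
    (hθ : π / 2 ≤ ∠ p x q) (hα : ∠ p x q / 2 ≤ ∠ p x y)
    (hp : dist x p ≤ dist x y) (hq : dist x q ≤ dist x y) :
    dist p q ≤ 2 * cos (∠ p x q / 4) * dist y p := by
  set θ := ∠ p x q
  set c := cos (θ / 2)
  have hθπ : θ ≤ π := angle_le_pi p x q
  have hc : 0 ≤ c := cos_nonneg_of_mem_Icc ⟨by linarith [pi_pos], by linarith⟩
  have hcos_θ : cos θ = 2 * c ^ 2 - 1 := by rw [← cos_two_mul]; ring_nf
  have hc2 : 2 * c ^ 2 - 1 ≤ 0 :=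
    hcos_θ ▸ cos_nonpos_of_pi_div_two_le_of_le hθ (by linarith [pi_pos])
  have hcos_quarter : (2 * cos (θ / 4)) ^ 2 = 2 * (1 + c) := by
    rw [mul_pow, cos_sq, show 2 * (θ / 4) = θ / 2 by ring]; ring
  have hcos_α : cos (∠ p x y) ≤ c :=
    cos_le_cos_of_nonneg_of_le_pi (by linarith [pi_pos]) (angle_le_pi p x y) hα
  have hpq : dist p q ^ 2 =
      dist x p ^ 2 + dist x q ^ 2 - 2 * dist x p * dist x q * (2 * c ^ 2 - 1) := by
    rw [← hcos_θ, sq, law_cos p x q, dist_comm p x, dist_comm q x]; ring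
  have hyp : dist x p ^ 2 + dist x y ^ 2 - 2 * dist x p * dist x y * c ≤ dist y p ^ 2 := by
    have hlaw := law_cos y x p
    rw [angle_comm y x p, dist_comm y x, dist_comm p x] at hlaw
    nlinarith [mul_le_mul_of_nonneg_left hcos_α
      (by positivity : 0 ≤ 2 * dist x p * dist x y)]
  have hsq : dist p q ^ 2 ≤ (2 * cos (θ / 4) * dist y p) ^ 2 := by
    rw [mul_pow, hcos_quarter, hpq]
    calc _ ≤ 2 * (1 + c) * (dist x p ^ 2 + dist x y ^ 2 - 2 * dist x p * dist x y * c) :=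
          law_cos_double_angle_le_two_mul_one_add_mul dist_nonneg dist_nonneg hp hq hc hc2
      _ ≤ _ := mul_le_mul_of_nonneg_left hyp (by linarith)
  have hk := cos_angle_div_four_pos p x q
  exact (pow_le_pow_iff_left₀ dist_nonneg (by positivity) two_ne_zero).1 hsq

lemma dist_le_two_mul_cos_mul_max_dist {x p q y : P} (hθ : π / 2 ≤ ∠ p x q)
    (hp : dist x p ≤ dist x y) (hq : dist x q ≤ dist x y) :
    dist p q ≤ 2 * cos (∠ p x q / 4) * max (dist y p) (dist y q) := by
  have hk : 0 ≤ 2 * cos (∠ p x q / 4) := by linarith [cos_angle_div_four_pos p x q]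
  have hsplit := angle_le_angle_add_angle x p y q
  rcases le_or_gt (∠ p x q / 2) (∠ p x y) with hα | hα
  · calc dist p q ≤ 2 * cos (∠ p x q / 4) * dist y p :=
          dist_le_two_mul_cos_mul_dist_of_half_le_angle hθ hα hp hq
      _ ≤ _ := mul_le_mul_of_nonneg_left (le_max_left _ _) hk
  · have hα' : ∠ q x p / 2 ≤ ∠ q x y := by
      rw [angle_comm q x p, angle_comm q x y]; linarith
    calc dist p q = dist q p := dist_comm p q
      _ ≤ 2 * cos (∠ q x p / 4) * dist y q :=
          dist_le_two_mul_cos_mul_dist_of_half_le_angle (angle_comm p x q ▸ hθ) hα' hq hp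
      _ ≤ _ := by rw [angle_comm q x p]; exact mul_le_mul_of_nonneg_left (le_max_right _ _) hk

end EuclideanAffine

theorem stmt_0_general {d : ℕ} (P : Set (EuclideanSpace ℝ (Fin d)))
    (x p q y z : EuclideanSpace ℝ (Fin d)) (θ : ℝ)
    (hp : p ∈ P) (hq : q ∈ P)
    (hpq : dist p q = Metric.diam P)
    (hangle : ∠ p x q = θ) (hθ : π / 2 < θ)
    (hyfar : ∀ y' ∈ P, dist x y' ≤ dist x y)
    (hzfar : ∀ z' ∈ P, dist y z' ≤ dist y z) :
    Metric.diam P / (2 * Real.sin (π / 2 - θ / 4)) ≤ dist y z := by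
  subst hangle
  have hk : 0 < 2 * cos (∠ p x q / 4) := by linarith [cos_angle_div_four_pos p x q]
  rw [← hpq, sin_pi_div_two_sub, div_le_iff₀' hk]
  calc dist p q ≤ 2 * cos (∠ p x q / 4) * max (dist y p) (dist y q) :=
        dist_le_two_mul_cos_mul_max_dist hθ.le (hyfar p hp) (hyfar q hq)
    _ ≤ 2 * cos (∠ p x q / 4) * dist y z :=
        mul_le_mul_of_nonneg_left (max_le (hzfar p hp) (hzfar q hq)) hk.le

theorem stmt_0 {d : ℕ} (P : Set (EuclideanSpace ℝ (Fin d)))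
    (hPc : IsCompact P) (hPconv : Convex ℝ P)
    (x p q y z : EuclideanSpace ℝ (Fin d)) (θ : ℝ)
    (hp : p ∈ P) (hq : q ∈ P)
    (hpq : dist p q = Metric.diam P)
    (hangle : ∠ p x q = θ) (hθ : π / 2 < θ)
    (hy : y ∈ P) (hyfar : ∀ y' ∈ P, dist x y' ≤ dist x y)
    (hz : z ∈ P) (hzfar : ∀ z' ∈ P, dist y z' ≤ dist y z) :
    Metric.diam P / (2 * Real.sin (π / 2 - θ / 4)) ≤ dist y z :=
  stmt_0_general P x p q y z θ hp hq hpq hangle hθ hyfar hzfar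
end

section
/- Let x, p, q, y be points in R^d with dist(x,p) ≤ dist(x,y) and dist(x,q) ≤ dist(x,y), and suppose the four angles satisfy angle(pxq) + angle(pyq) + angle(xpy) + angle(xqy) = 2π (i.e., x, p, y, q form a planar quadrilateral). Then angle(pyq) ≤ π − angle(pxq)/2. -/
open Real EuclideanGeometry

section aux

variable {V : Type*} [NormedAddCommGroup V] [InnerProductSpace ℝ V]

local notation "⟪" x ", " y "⟫" => @inner ℝ V _ x y


lemma angle_triangle_unit (u v w : V) (hu : ‖u‖ = 1) (hv : ‖v‖ = 1) (hw : ‖w‖ = 1) :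
    InnerProductGeometry.angle u v ≤ InnerProductGeometry.angle u w + InnerProductGeometry.angle w v := by
  set A := InnerProductGeometry.angle u w with hA
  set B := InnerProductGeometry.angle w v with hB
  rcases le_or_gt π (A + B) with hle | hlt
  · exact (InnerProductGeometry.angle_le_pi u v).trans hle
  have hA0 : 0 ≤ A := InnerProductGeometry.angle_nonneg u w
  have hAπ : A ≤ π := InnerProductGeometry.angle_le_pi u w
  have hB0 : 0 ≤ B := InnerProductGeometry.angle_nonneg w v
  have hBπ : B ≤ π := InnerProductGeometry.angle_le_pi w v
  have hcA : Real.cos A = ⟪u, w⟫ := by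
    rw [hA, InnerProductGeometry.cos_angle, hu, hw]; ring_nf
  have hcB : Real.cos B = ⟪w, v⟫ := by
    rw [hB, InnerProductGeometry.cos_angle, hw, hv]; ring_nf
  set a : ℝ := ⟪u, w⟫ with ha
  set b : ℝ := ⟪w, v⟫ with hb
  set u' : V := u - a • w with hu'
  set v' : V := v - b • w with hv'
  have hww : ⟪w, w⟫ = 1 := by
    rw [real_inner_self_eq_norm_sq, hw]; norm_num
  have huu : ⟪u, u⟫ = 1 := by
    rw [real_inner_self_eq_norm_sq, hu]; norm_num
  have hvv : ⟪v, v⟫ = 1 := by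
    rw [real_inner_self_eq_norm_sq, hv]; norm_num
  have hwu : ⟪w, u⟫ = a := by rw [real_inner_comm]
  have hvw : ⟪v, w⟫ = b := by rw [real_inner_comm]
  have hinner : ⟪u', v'⟫ = ⟪u, v⟫ - a * b := by
    simp only [hu', hv', inner_sub_left, inner_sub_right, real_inner_smul_left,
      real_inner_smul_right, hww, hwu, hvw, ← ha, ← hb]
    ring
  have hnu' : ‖u'‖ ^ 2 = 1 - a ^ 2 := by
    rw [← real_inner_self_eq_norm_sq]
    simp only [hu', inner_sub_left, inner_sub_right, real_inner_smul_left,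
      real_inner_smul_right, hww, hwu, huu, ← ha]
    ring
  have hnv' : ‖v'‖ ^ 2 = 1 - b ^ 2 := by
    rw [← real_inner_self_eq_norm_sq]
    simp only [hv', inner_sub_left, inner_sub_right, real_inner_smul_left,
      real_inner_smul_right, hww, hvw, hvv, ← hb]
    ring
  have hsinA : Real.sin A = ‖u'‖ := by
    have h1 : Real.sin A ^ 2 = ‖u'‖ ^ 2 := by
      rw [hnu', Real.sin_sq, hcA]
    have h2 := Real.sin_nonneg_of_nonneg_of_le_pi hA0 hAπ
    rw [← Real.sqrt_sq h2, h1, Real.sqrt_sq (norm_nonneg _)]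
  have hsinB : Real.sin B = ‖v'‖ := by
    have h1 : Real.sin B ^ 2 = ‖v'‖ ^ 2 := by
      rw [hnv', Real.sin_sq, hcB]
    have h2 := Real.sin_nonneg_of_nonneg_of_le_pi hB0 hBπ
    rw [← Real.sqrt_sq h2, h1, Real.sqrt_sq (norm_nonneg _)]
  have hcauchy : -(‖u'‖ * ‖v'‖) ≤ ⟪u', v'⟫ := neg_le_of_abs_le (abs_real_inner_le_norm u' v')
  have hkey : Real.cos (A + B) ≤ Real.cos (InnerProductGeometry.angle u v) := by
    rw [Real.cos_add, hcA, hcB, hsinA, hsinB, InnerProductGeometry.cos_angle u v, hu, hv]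
    have : ⟪u, v⟫ / (1 * 1) = ⟪u, v⟫ := by ring
    rw [this]
    nlinarith [hinner, hcauchy]
  by_contra hcon
  push_neg at hcon
  exact absurd hkey (not_le.2 (Real.cos_lt_cos_of_nonneg_of_le_pi
    (by positivity : (0:ℝ) ≤ A + B) (InnerProductGeometry.angle_le_pi u v) hcon))


lemma angle_triangle' (u v w : V) : InnerProductGeometry.angle u v ≤ InnerProductGeometry.angle u w + InnerProductGeometry.angle w v := by
  rcases eq_or_ne u 0 with rfl | hu
  · rw [InnerProductGeometry.angle_zero_left]
    linarith [InnerProductGeometry.angle_nonneg w v, InnerProductGeometry.angle_zero_left (V := V) w]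
  rcases eq_or_ne v 0 with rfl | hv
  · rw [InnerProductGeometry.angle_zero_right]
    linarith [InnerProductGeometry.angle_nonneg u w, InnerProductGeometry.angle_zero_right (V := V) w]
  rcases eq_or_ne w 0 with rfl | hw
  · rw [InnerProductGeometry.angle_zero_right, InnerProductGeometry.angle_zero_left]
    linarith [InnerProductGeometry.angle_le_pi u v]
  have hu' : (0:ℝ) < ‖u‖⁻¹ := inv_pos.2 (norm_pos_iff.2 hu)
  have hv' : (0:ℝ) < ‖v‖⁻¹ := inv_pos.2 (norm_pos_iff.2 hv)
  have hw' : (0:ℝ) < ‖w‖⁻¹ := inv_pos.2 (norm_pos_iff.2 hw)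
  have h := angle_triangle_unit (‖u‖⁻¹ • u) (‖v‖⁻¹ • v) (‖w‖⁻¹ • w)
    (by rw [norm_smul]; simp [norm_ne_zero_iff.2 hu])
    (by rw [norm_smul]; simp [norm_ne_zero_iff.2 hv])
    (by rw [norm_smul]; simp [norm_ne_zero_iff.2 hw])
  rwa [InnerProductGeometry.angle_smul_left_of_pos _ _ hu', InnerProductGeometry.angle_smul_right_of_pos _ _ hv',
    InnerProductGeometry.angle_smul_left_of_pos _ _ hu', InnerProductGeometry.angle_smul_right_of_pos _ _ hw',
    InnerProductGeometry.angle_smul_left_of_pos _ _ hw', InnerProductGeometry.angle_smul_right_of_pos _ _ hv'] at h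

end aux

/-- In a triangle, the angle opposite the smaller side is smaller. -/
lemma angle_le_angle_of_dist_le {d : ℕ} {x p y : EuclideanSpace ℝ (Fin d)}
    (h : dist x p ≤ dist x y) : ∠ x y p ≤ ∠ x p y := by
  rcases eq_or_ne x p with rfl | hxp
  · rw [EuclideanGeometry.angle_self_left]
    rcases eq_or_ne x y with rfl | hxy
    · rw [EuclideanGeometry.angle_self_right]
    · rw [EuclideanGeometry.angle_self_of_ne hxy]
      positivity
  rcases eq_or_ne x y with rfl | hxy
  · have : dist x p = 0 := le_antisymm (by simpa using h) dist_nonneg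
    exact absurd (dist_eq_zero.1 this) hxp
  rcases eq_or_ne p y with rfl | hpy
  · exact le_refl _
  -- nondegenerate case
  have ha : (0:ℝ) < dist x p := dist_pos.2 hxp
  have hb : (0:ℝ) < dist p y := dist_pos.2 hpy
  have hc : (0:ℝ) < dist x y := dist_pos.2 hxy
  have lawY := EuclideanGeometry.law_cos x y p
  have lawP := EuclideanGeometry.law_cos x p y
  have htri : dist p y ≤ dist p x + dist x y := dist_triangle p x y
  rw [dist_comm p x] at htri
  have hY0 : 0 ≤ ∠ x p y := EuclideanGeometry.angle_nonneg _ _ _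
  have hPπ : ∠ x y p ≤ π := EuclideanGeometry.angle_le_pi _ _ _
  have hcos : Real.cos (∠ x p y) ≤ Real.cos (∠ x y p) := by
    rw [dist_comm y p] at lawP
    have e1 : Real.cos (∠ x y p) * (2 * dist x y * dist p y) =
        dist x y ^ 2 + dist p y ^ 2 - dist x p ^ 2 := by linear_combination lawY
    have e2 : Real.cos (∠ x p y) * (2 * dist x p * dist p y) =
        dist x p ^ 2 + dist p y ^ 2 - dist x y ^ 2 := by linear_combination lawP
    have key : (Real.cos (∠ x y p) - Real.cos (∠ x p y)) *
        (2 * dist x p * dist p y * dist x y) =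
        (dist x y - dist x p) * (dist x p + dist x y - dist p y) *
          (dist x p + dist x y + dist p y) := by
      linear_combination (dist x p) * e1 - (dist x y) * e2
    nlinarith [key, mul_nonneg (mul_nonneg (sub_nonneg.2 h) (sub_nonneg.2 htri))
      (by positivity : (0:ℝ) ≤ dist x p + dist x y + dist p y),
      mul_pos (mul_pos ha hb) hc]
  by_contra hcon
  push_neg at hcon
  exact absurd hcos (not_le.2 (Real.cos_lt_cos_of_nonneg_of_le_pi hY0 hPπ hcon))

theorem stmt_1 {d : ℕ} (x p q y : EuclideanSpace ℝ (Fin d))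
    (hxp : dist x p ≤ dist x y) (hxq : dist x q ≤ dist x y)
    (hsum : ∠ p x q + ∠ p y q + ∠ x p y + ∠ x q y = 2 * π) :
    ∠ p y q ≤ π - ∠ p x q / 2 := by
  have h1 : ∠ x y p ≤ ∠ x p y := angle_le_angle_of_dist_le hxp
  have h2 : ∠ x y q ≤ ∠ x q y := angle_le_angle_of_dist_le hxq
  have h3 : ∠ p y q ≤ ∠ p y x + ∠ x y q := by
    show InnerProductGeometry.angle (p -ᵥ y) (q -ᵥ y) ≤
      InnerProductGeometry.angle (p -ᵥ y) (x -ᵥ y) + InnerProductGeometry.angle (x -ᵥ y) (q -ᵥ y)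
    exact angle_triangle' _ _ _
  rw [EuclideanGeometry.angle_comm p y x] at h3
  linarith
end

section
/- Let B_u be the closed ball in R^d centered at u with radius r, and B_{v'} the closed ball centered at v' with radius r, where dist(u, v') = r. Let x be the midpoint of segment [u, v']. Then B_u ∩ B_{v'} is contained in the closed ball centered at x with radius (√3/2)·r. -/
open Real Metric

theorem stmt_2 {d : ℕ} (u v' : EuclideanSpace ℝ (Fin d)) (r : ℝ) (hr : 0 < r)
    (huv : dist u v' = r) :
    Metric.closedBall u r ∩ Metric.closedBall v' r ⊆
      Metric.closedBall (midpoint ℝ u v') (Real.sqrt 3 / 2 * r) := by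
  rintro p ⟨hpu, hpv⟩
  rw [Metric.mem_closedBall] at *
  have hc : 0 ≤ Real.sqrt 3 / 2 * r := by positivity
  refine le_of_pow_le_pow_left₀ two_ne_zero hc ?_
  set a := p - u with ha
  set b := p - v' with hb
  have hmid : p - midpoint ℝ u v' = (2:ℝ)⁻¹ • (a + b) := by
    rw [midpoint_eq_smul_add, invOf_eq_inv, ha, hb]
    module
  have hdist : dist p (midpoint ℝ u v') = 2⁻¹ * ‖a + b‖ := by
    rw [dist_eq_norm, hmid, norm_smul]
    simp
  have hpar := parallelogram_law_with_norm ℝ a b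
  have hab : ‖a - b‖ = r := by
    have : a - b = v' - u := by rw [ha, hb]; abel
    rw [this, ← dist_eq_norm, dist_comm, huv]
  have h1 : ‖a‖ ≤ r := by rw [ha, ← dist_eq_norm]; exact hpu
  have h2 : ‖b‖ ≤ r := by rw [hb, ← dist_eq_norm]; exact hpv
  have hsum : ‖a + b‖ ^ 2 ≤ 3 * r ^ 2 := by
    nlinarith [norm_nonneg a, norm_nonneg b, norm_nonneg (a + b)]
  have h3 : Real.sqrt 3 ^ 2 = 3 := Real.sq_sqrt (by norm_num)
  rw [hdist]
  nlinarith [norm_nonneg (a + b)]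
end

section
/- Let P be a convex polytope in R^d, v a vertex of P, u ∈ P a point farthest from v, and w ∈ P a point farthest from u. Let x be the point on the ray from u through v at distance dist(u,w)/2 from u. If p, q ∈ P satisfy dist(p,q) = diam(P) and angle(p, x, q) = θ, then dist(u,w) ≥ min{ diam(P), diam(P)/(√3·sin(θ/2)) }. -/
/-!
Put `r = dist u w / 2`. Every `a ∈ P` lies in the ball about `v` through `u` (as `u` is farthest
from `v`) and within `2 r` of `u`; a short computation shows that such a point is within `√3 r`
of `x`. On the other hand, two points within `R` of `x` that are more than `R` apart, seen from
`x` under the angle `θ`, are at most `2 R sin (θ / 2)` apart: the law of cosines is convex in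
each side length, so the extreme case is `p`, `q` on the sphere of radius `R`. If
`diam P > dist u w = 2 r ≥ √3 r`, this applies to `p`, `q` with `R = √3 r`.
-/

open Real Metric EuclideanGeometry

lemma sq_add_sq_sub_two_mul_mul_le {a b c R : ℝ} (ha : 0 ≤ a) (hb : 0 ≤ b) (haR : a ≤ R)
    (hbR : b ≤ R) (hlt : R ^ 2 < a ^ 2 + b ^ 2 - 2 * a * b * c) :
    a ^ 2 + b ^ 2 - 2 * a * b * c ≤ 2 * R ^ 2 * (1 - c) := by
  have hab : a * b ≤ R ^ 2 := by nlinarith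
  have hmix : a ^ 2 + b ^ 2 - a * b ≤ R ^ 2 := by
    rcases le_total a b with h | h <;>
      nlinarith [mul_nonneg ha (sub_nonneg.2 h), mul_nonneg hb (sub_nonneg.2 h)]
  rcases le_or_gt c 0 with hc | hc
  · nlinarith [mul_nonneg (neg_nonneg.2 hc) (sub_nonneg.2 hab)]
  rcases le_or_gt c (1 / 2) with hc' | hc'
  · nlinarith [mul_nonneg (sub_nonneg.2 hc') (sub_nonneg.2 hab),
      mul_nonneg hc.le (sub_nonneg.2 hab)]
  · nlinarith [mul_nonneg (mul_nonneg ha hb) (sub_nonneg.2 hc'.le)]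

lemma dist_le_two_mul_mul_sin_half_angle {V Pt : Type*} [NormedAddCommGroup V]
    [InnerProductSpace ℝ V] [MetricSpace Pt] [NormedAddTorsor V Pt] {p x q : Pt} {R : ℝ}
    (hp : dist p x ≤ R) (hq : dist q x ≤ R) (hlt : R < dist p q) :
    dist p q ≤ 2 * R * sin (∠ p x q / 2) := by
  have hR : 0 ≤ R := dist_nonneg.trans hp
  have hsin : 0 ≤ sin (∠ p x q / 2) :=
    sin_nonneg_of_nonneg_of_le_pi (by linarith [angle_nonneg p x q])
      (by linarith [angle_le_pi p x q, pi_pos])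
  have hcos : cos (∠ p x q) = 1 - 2 * sin (∠ p x q / 2) ^ 2 := by
    rw [← cos_two_mul_eq_one_sub, mul_div_cancel₀ _ two_ne_zero]
  have hsq : dist p q ^ 2 ≤ (2 * R * sin (∠ p x q / 2)) ^ 2 := by
    have hlaw := law_cos p x q
    have := sq_add_sq_sub_two_mul_mul_le dist_nonneg dist_nonneg hp hq
      (c := cos (∠ p x q)) (by nlinarith [dist_nonneg (x := p) (y := q)])
    nlinarith
  exact (pow_le_pow_iff_left₀ dist_nonneg (by positivity) two_ne_zero).1 hsq

lemma dist_le_sqrt_three_mul_of_mem_ray {V : Type*} [NormedAddCommGroup V]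
    [InnerProductSpace ℝ V] {v u x a : V} {t r : ℝ} (ht : 0 ≤ t) (hx : x = u + t • (v - u))
    (hux : dist u x = r) (hva : dist v a ≤ dist v u) (hua : dist u a ≤ 2 * r)
    (huv : dist u v ≤ 2 * r) :
    dist x a ≤ √3 * r := by
  set N := ‖a - u‖
  set s := ‖v - u‖
  set I := inner ℝ (a - u) (v - u)
  have hr : 0 ≤ r := hux ▸ dist_nonneg
  have hts : t * s = r := by
    rw [← hux, hx, dist_eq_norm, show u - (u + t • (v - u)) = -(t • (v - u)) by abel,
      norm_neg, norm_smul, norm_of_nonneg ht]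
  have hxa : dist x a ^ 2 = t ^ 2 * s ^ 2 - 2 * t * I + N ^ 2 := by
    rw [dist_eq_norm, hx, show u + t • (v - u) - a = t • (v - u) - (a - u) by abel,
      norm_sub_sq_real, real_inner_smul_left, real_inner_comm, norm_smul, norm_of_nonneg ht]
    ring
  have hI : N ^ 2 ≤ 2 * I := by
    have h := pow_le_pow_left₀ dist_nonneg hva 2
    rw [dist_eq_norm, dist_eq_norm, show v - a = (v - u) - (a - u) by abel, norm_sub_sq_real,
      real_inner_comm] at h
    linarith
  have hN : N ≤ 2 * r := by rwa [dist_comm, dist_eq_norm] at hua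
  have hs : s ≤ 2 * r := by rwa [dist_comm, dist_eq_norm] at huv
  refine (pow_le_pow_iff_left₀ dist_nonneg (by positivity) two_ne_zero).1 ?_
  rw [mul_pow, sq_sqrt zero_le_three]
  calc dist x a ^ 2 ≤ r ^ 2 + (1 - t) * N ^ 2 := by
        rw [hxa, ← hts]; nlinarith [mul_nonneg ht (sub_nonneg.2 hI)]
    _ ≤ 3 * r ^ 2 := by
        rcases le_total t 1 with ht1 | ht1
        · have hN0 : 0 ≤ N := norm_nonneg _
          nlinarith [mul_nonneg (sub_nonneg.2 ht1)
              (mul_nonneg (sub_nonneg.2 hN) (add_nonneg hN0 hr)),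
            mul_nonneg (mul_nonneg hr ht) (sub_nonneg.2 hs), congrArg (r * ·) hts]
        · nlinarith [mul_nonneg (sub_nonneg.2 ht1) (sq_nonneg N)]

theorem stmt_3_general {d : ℕ} (P : Set (EuclideanSpace ℝ (Fin d)))
    (v u w x p q : EuclideanSpace ℝ (Fin d)) (θ : ℝ)
    (hv : v ∈ Set.extremePoints ℝ P)
    (hufar : ∀ a ∈ P, dist v a ≤ dist v u)
    (hwfar : ∀ a ∈ P, dist u a ≤ dist u w)
    (hray : ∃ t : ℝ, 0 ≤ t ∧ x = u + t • (v - u))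
    (hxdist : dist u x = dist u w / 2)
    (hp : p ∈ P) (hq : q ∈ P) (hpq : dist p q = Metric.diam P)
    (hangle : ∠ p x q = θ) :
    min (Metric.diam P) (Metric.diam P / (Real.sqrt 3 * Real.sin (θ / 2))) ≤ dist u w := by
  rcases le_or_gt (diam P) (dist u w) with hle | hlt
  · exact (min_le_left _ _).trans hle
  obtain ⟨t, ht, hx⟩ := hray
  have hxP : ∀ a ∈ P, dist a x ≤ √3 * (dist u w / 2) := fun a ha => by
    rw [dist_comm]
    exact dist_le_sqrt_three_mul_of_mem_ray ht hx hxdist (hufar a ha)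
      (by linarith [hwfar a ha]) (by linarith [hwfar v hv.1])
  have hsqrt3 : √3 < 2 := by rw [sqrt_lt' two_pos]; norm_num
  have hD : diam P ≤ √3 * sin (θ / 2) * dist u w := by
    rw [← hpq, ← hangle]
    refine (dist_le_two_mul_mul_sin_half_angle (hxP p hp) (hxP q hq) ?_).trans_eq (by ring)
    nlinarith [dist_nonneg (x := u) (y := w)]
  have hsin : 0 < sin (θ / 2) := by
    by_contra! h
    nlinarith [mul_nonneg (mul_nonneg (sqrt_nonneg 3) (dist_nonneg (x := u) (y := w)))
      (neg_nonneg.2 h), dist_nonneg (x := u) (y := w)]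
  exact (min_le_right _ _).trans <| (div_le_iff₀' (by positivity)).2 hD

theorem stmt_3 {d : ℕ} (P : Set (EuclideanSpace ℝ (Fin d)))
    (hPc : IsCompact P) (hPconv : Convex ℝ P)
    (v u w x p q : EuclideanSpace ℝ (Fin d)) (θ : ℝ)
    (hv : v ∈ Set.extremePoints ℝ P)
    (hu : u ∈ P) (hufar : ∀ a ∈ P, dist v a ≤ dist v u)
    (hw : w ∈ P) (hwfar : ∀ a ∈ P, dist u a ≤ dist u w)
    (hray : ∃ t : ℝ, 0 ≤ t ∧ x = u + t • (v - u))
    (hxdist : dist u x = dist u w / 2)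
    (hp : p ∈ P) (hq : q ∈ P) (hpq : dist p q = Metric.diam P)
    (hangle : ∠ p x q = θ) :
    min (Metric.diam P) (Metric.diam P / (Real.sqrt 3 * Real.sin (θ / 2))) ≤ dist u w :=
  stmt_3_general P v u w x p q θ hv hufar hwfar hray hxdist hp hq hpq hangle
end

section
/- Let P be a convex polytope in R^d, v a vertex of P, u ∈ P farthest from v, w ∈ P farthest from u, and let x be the point on the ray from u through v at distance dist(u,w)/2 from u. Let y ∈ P be farthest from x and z ∈ P farthest from y. Then diam(P)/(2√2/√3) ≤ max{dist(u,w), dist(y,z)} ≤ diam(P). -/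
open Real Metric EuclideanGeometry

/-!
Let `R = dist u w`. Since `u` is farthest from `v ∈ P`, every `a ∈ P` satisfies
`2⟪u - a, v - u⟫ ≤ -‖u - a‖²`; expanding `‖x - a‖²` along the ray from `u` through `v` then puts
`P` inside the ball of radius `(√3/2) R` about `x`, so `dist x y ≤ (√3/2) R`. Now `P` lies in the
balls about `x` of radius `s = dist x y` and about `y` of radius `L = dist y z`. For `p, q ∈ P`
with midpoint `m ∈ P`, Apollonius's theorem at both centres gives
`‖p - q‖² ≤ 4s² - 4‖m - x‖²` and `‖p - q‖² ≤ 4L² - 4‖m - y‖²`, and `‖m - x‖ ≥ s - ‖m - y‖`.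
Optimising over `‖m - y‖` yields `‖p - q‖² ≤ (8/3) max(R, L)²`.
-/

variable {E : Type*} [NormedAddCommGroup E] [InnerProductSpace ℝ E]

lemma two_inner_le_neg_norm_sq_of_dist_le {u v a : E} (h : dist v a ≤ dist v u) :
    2 * inner ℝ (u - a) (v - u) ≤ -‖u - a‖ ^ 2 := by
  have hsq : ‖(v - u) + (u - a)‖ ^ 2 ≤ ‖v - u‖ ^ 2 := by
    rw [sub_add_sub_cancel, ← dist_eq_norm, ← dist_eq_norm]
    gcongr
  rw [norm_add_sq_real, real_inner_comm] at hsq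
  linarith

lemma dist_sq_le_of_dist_le_dist_of_mem_ray {u v x a : E} {t R : ℝ} (ht : 0 ≤ t)
    (hx : x = u + t • (v - u)) (hxu : dist u x = R / 2) (huv : dist u v ≤ R)
    (hua : dist u a ≤ R) (hva : dist v a ≤ dist v u) :
    dist x a ^ 2 ≤ 3 / 4 * R ^ 2 := by
  have hinner := two_inner_le_neg_norm_sq_of_dist_le hva
  have hexpand : dist x a ^ 2 =
      ‖u - a‖ ^ 2 + t * (2 * inner ℝ (u - a) (v - u)) + (t * ‖v - u‖) ^ 2 := by
    rw [dist_eq_norm, hx, add_sub_right_comm, norm_add_sq_real, real_inner_smul_right, norm_smul,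
      Real.norm_eq_abs, abs_of_nonneg ht]
    ring
  have hstep : t * ‖v - u‖ = R / 2 := by
    rw [← hxu, hx, dist_eq_norm, sub_add_cancel_left, norm_neg, norm_smul, Real.norm_eq_abs,
      abs_of_nonneg ht]
  have hua' : ‖u - a‖ ≤ R := by rwa [← dist_eq_norm]
  have huv' : ‖v - u‖ ≤ R := by rwa [← dist_eq_norm, dist_comm]
  -- `t ≥ 1/2` as soon as `R > 0`, because `t ‖v - u‖ = R/2` and `‖v - u‖ ≤ R`.
  have hdecay : (1 - t) * ‖u - a‖ ^ 2 ≤ R ^ 2 / 2 := by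
    have hR : 0 ≤ R := dist_nonneg.trans hua
    rcases le_or_gt t 1 with h1 | h1
    · nlinarith [mul_le_mul_of_nonneg_left huv' ht, mul_le_mul hua' hua' (norm_nonneg _) hR]
    · nlinarith [sq_nonneg ‖u - a‖]
  rw [hexpand, hstep]
  nlinarith [mul_le_mul_of_nonneg_left hinner ht]

lemma dist_sq_le_of_subset_closedBall_inter {S : Set E} (hS : Convex ℝ S) {x y : E} {r M : ℝ}
    (hSx : S ⊆ closedBall x (dist x y)) (hSy : S ⊆ closedBall y r)
    (hxy : dist x y ^ 2 ≤ 3 / 4 * M ^ 2) (hr : r ≤ M) {p q : E} (hp : p ∈ S) (hq : q ∈ S) :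
    dist p q ^ 2 ≤ 8 / 3 * M ^ 2 := by
  set m := midpoint ℝ p q
  have hm : m ∈ S := hS.midpoint_mem hp hq
  have hApx := dist_sq_add_dist_sq_eq_two_mul_dist_midpoint_sq_add_half_dist_sq x p q
  have hApy := dist_sq_add_dist_sq_eq_two_mul_dist_midpoint_sq_add_half_dist_sq y p q
  have hball {c : E} {ρ : ℝ} (h : S ⊆ closedBall c ρ) {a : E} (ha : a ∈ S) :
      dist c a ^ 2 ≤ ρ ^ 2 := by
    have := mem_closedBall'.mp (h ha)
    gcongr
  have hfar : dist p q ^ 2 + 4 * dist x m ^ 2 ≤ 4 * dist x y ^ 2 := by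
    nlinarith [hball hSx hp, hball hSx hq]
  have hnear : dist p q ^ 2 + 4 * dist y m ^ 2 ≤ 4 * M ^ 2 := by
    have hr0 : 0 ≤ r := dist_nonneg.trans (mem_closedBall.mp (hSy hp))
    nlinarith [hball hSy hp, hball hSy hq, mul_le_mul hr hr hr0 (hr0.trans hr)]
  have htri : (dist x y - dist y m) ^ 2 ≤ dist x m ^ 2 := by
    rw [← sq_abs, dist_comm y m]
    gcongr
    exact abs_dist_sub_le x m y
  have hym : 0 ≤ dist y m := dist_nonneg
  have hxy0 : 0 ≤ dist x y := dist_nonneg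
  rcases le_or_gt (dist y m ^ 2) (M ^ 2 / 3) with hsmall | hlarge
  · nlinarith [sq_nonneg (2 * dist x y - 3 * dist y m)]
  · linarith

lemma diam_le_of_subset_closedBall_inter {S : Set E} (hS : Convex ℝ S) {x y : E} {r M : ℝ}
    (hSx : S ⊆ closedBall x (dist x y)) (hSy : S ⊆ closedBall y r)
    (hxy : dist x y ^ 2 ≤ 3 / 4 * M ^ 2) (hr : r ≤ M) (hM : 0 ≤ M) :
    diam S ≤ 2 * √2 / √3 * M := by
  refine diam_le_of_forall_dist_le (by positivity) fun p hp q hq => ?_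
  refine le_of_pow_le_pow_left₀ two_ne_zero (by positivity) ?_
  calc dist p q ^ 2 ≤ 8 / 3 * M ^ 2 := dist_sq_le_of_subset_closedBall_inter hS hSx hSy hxy hr hp hq
    _ = (2 * √2 / √3 * M) ^ 2 := by
      rw [mul_pow, div_pow, mul_pow, sq_sqrt zero_le_two, sq_sqrt zero_le_three]
      ring

theorem stmt_4 {d : ℕ} (P : Set (EuclideanSpace ℝ (Fin d)))
    (hPc : IsCompact P) (hPconv : Convex ℝ P)
    (v u w x y z : EuclideanSpace ℝ (Fin d))
    (hv : v ∈ Set.extremePoints ℝ P)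
    (hu : u ∈ P) (hufar : ∀ a ∈ P, dist v a ≤ dist v u)
    (hw : w ∈ P) (hwfar : ∀ a ∈ P, dist u a ≤ dist u w)
    (hray : ∃ t : ℝ, 0 ≤ t ∧ x = u + t • (v - u))
    (hxdist : dist u x = dist u w / 2)
    (hy : y ∈ P) (hyfar : ∀ a ∈ P, dist x a ≤ dist x y)
    (hz : z ∈ P) (hzfar : ∀ a ∈ P, dist y a ≤ dist y z) :
    Metric.diam P / (2 * Real.sqrt 2 / Real.sqrt 3) ≤ max (dist u w) (dist y z) ∧
      max (dist u w) (dist y z) ≤ Metric.diam P := by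
  obtain ⟨t, ht, hx⟩ := hray
  have hPb := hPc.isBounded
  refine ⟨?_, max_le (dist_le_diam_of_mem hPb hu hw) (dist_le_diam_of_mem hPb hy hz)⟩
  have hxy : dist x y ^ 2 ≤ 3 / 4 * dist u w ^ 2 :=
    dist_sq_le_of_dist_le_dist_of_mem_ray ht hx hxdist (hwfar v hv.1) (hwfar y hy) (hufar y hy)
  rw [div_le_iff₀ (by positivity), mul_comm]
  refine diam_le_of_subset_closedBall_inter hPconv (fun a ha => mem_closedBall'.mpr (hyfar a ha))
    (fun a ha => mem_closedBall'.mpr (hzfar a ha)) (hxy.trans ?_) (le_max_right _ _)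
    (le_max_of_le_left dist_nonneg)
  gcongr
  exact le_max_left _ _
end

section
/- For θ ∈ (π/2, π], the quantity min{2 cos(θ/4), √3 sin(θ/2)} attains its maximum value 2√2/√3 exactly when sin(θ/4) = 1/√3. -/
open Real


lemma aux_min (s c : ℝ) (hs : 0 < s) (hc : 0 < c) (h1 : s^2 + c^2 = 1) :
    (min (2*c) (Real.sqrt 3 * (2*s*c)) = 2 * Real.sqrt 2 / Real.sqrt 3 ↔ s = 1 / Real.sqrt 3) ∧
    min (2*c) (Real.sqrt 3 * (2*s*c)) ≤ 2 * Real.sqrt 2 / Real.sqrt 3 := by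
  have ha : (0:ℝ) < Real.sqrt 2 := Real.sqrt_pos.mpr (by norm_num)
  have hb : (0:ℝ) < Real.sqrt 3 := Real.sqrt_pos.mpr (by norm_num)
  have ha2 : (Real.sqrt 2)^2 = 2 := Real.sq_sqrt (by norm_num)
  have hb2 : (Real.sqrt 3)^2 = 3 := Real.sq_sqrt (by norm_num)
  set a := Real.sqrt 2
  set b := Real.sqrt 3
  have hM : 2 * a / b = 2 * a / b := rfl
  rcases lt_trichotomy (b * s) 1 with h | h | h
  · -- s < 1/b : second term < M
    have hx : 3 * s^2 < 1 := by nlinarith [mul_pos hb hs]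
    have h9 : 9 * (s^2 * c^2) < 2 := by
      nlinarith [mul_pos (show (0:ℝ) < 1 - 3*s^2 by linarith) (show (0:ℝ) < 2 - 3*s^2 by linarith)]
    have hlt : b * (2*s*c) < 2 * a / b := by
      rw [lt_div_iff₀ hb]
      nlinarith [mul_pos hs hc, mul_pos (mul_pos hs hc) hb, sq_nonneg (3*s*c - a),
        mul_pos ha (mul_pos hs hc)]
    have hmin : min (2*c) (b * (2*s*c)) < 2 * a / b :=
      lt_of_le_of_lt (min_le_right _ _) hlt
    refine ⟨⟨fun he => absurd he (ne_of_lt hmin), fun he => ?_⟩, le_of_lt hmin⟩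
    · exfalso; rw [he] at h; rw [mul_one_div, div_self (ne_of_gt hb)] at h; exact lt_irrefl 1 h
  · -- equality case
    have hseq : s = 1 / b := by field_simp; linarith [mul_comm b s]
    have hceq : c = a / b := by
      have hc2 : c^2 = (a/b)^2 := by
        rw [div_pow, ha2, hb2]; nlinarith
      have : (0:ℝ) < a / b := div_pos ha hb
      nlinarith [sq_nonneg (c - a/b), sq_nonneg (c + a/b)]
    have e1 : 2 * c = 2 * a / b := by rw [hceq]; ring
    have e2 : b * (2*s*c) = 2 * a / b := by
      rw [hseq, hceq]; field_simp
    rw [e1, e2, min_self]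
    exact ⟨⟨fun _ => hseq, fun _ => rfl⟩, le_refl _⟩
  · -- s > 1/b : first term < M
    have hlt : 2 * c < 2 * a / b := by
      rw [lt_div_iff₀ hb]
      nlinarith [mul_pos hb hc, sq_nonneg (b*c - a), mul_pos ha (mul_pos hb hc)]
    have hmin : min (2*c) (b * (2*s*c)) < 2 * a / b :=
      lt_of_le_of_lt (min_le_left _ _) hlt
    refine ⟨⟨fun he => absurd he (ne_of_lt hmin), fun he => ?_⟩, le_of_lt hmin⟩
    · exfalso; rw [he] at h; rw [mul_one_div, div_self (ne_of_gt hb)] at h; exact lt_irrefl 1 h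

lemma half_eq (θ : ℝ) : Real.sin (θ / 2) = 2 * Real.sin (θ/4) * Real.cos (θ/4) := by
  have : θ / 2 = 2 * (θ / 4) := by ring
  rw [this, Real.sin_two_mul]

lemma sc_pos {θ : ℝ} (hθ : θ ∈ Set.Ioc (π/2) π) :
    0 < Real.sin (θ/4) ∧ 0 < Real.cos (θ/4) := by
  have hpi := Real.pi_pos
  obtain ⟨h1, h2⟩ := hθ
  constructor
  · exact Real.sin_pos_of_pos_of_lt_pi (by linarith) (by linarith)
  · exact Real.cos_pos_of_mem_Ioo ⟨by linarith, by linarith⟩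

noncomputable def θ₀ : ℝ := 4 * Real.arcsin (1 / Real.sqrt 3)

lemma hb3 : (0:ℝ) < Real.sqrt 3 := Real.sqrt_pos.mpr (by norm_num)

lemma inv3_lt_one : (1:ℝ) / Real.sqrt 3 < 1 := by
  rw [div_lt_one hb3]
  nlinarith [Real.sq_sqrt (show (0:ℝ) ≤ 3 by norm_num), hb3]

lemma θ₀_mem : θ₀ ∈ Set.Ioc (π/2) π := by
  have h1 : (0:ℝ) < 1 / Real.sqrt 3 := by positivity
  have hpi := Real.pi_pos
  have hlt := inv3_lt_one
  constructor
  · have hs : Real.sin (π/8) < 1 / Real.sqrt 3 := by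
      have hsin := Real.sin_lt (show (0:ℝ) < π/8 by positivity)
      have hp : π/8 < 1/2 := by nlinarith [Real.pi_lt_d2]
      have : (1:ℝ)/2 < 1 / Real.sqrt 3 := by
        rw [div_lt_div_iff₀ (by norm_num) hb3]
        nlinarith [Real.sq_sqrt (show (0:ℝ) ≤ 3 by norm_num), hb3]
      linarith
    have := (Real.lt_arcsin_iff_sin_lt' (x := π/8) ⟨by linarith, by linarith⟩).mpr hs
    unfold θ₀; linarith
  · have h6 : Real.sqrt 2 * Real.sqrt 3 = Real.sqrt 6 := by
      rw [← Real.sqrt_mul (by norm_num)]; norm_num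
    have h62 : (2:ℝ) < Real.sqrt 6 := by
      rw [show (2:ℝ) = Real.sqrt 4 by rw [show (4:ℝ) = 2^2 by norm_num, Real.sqrt_sq]; norm_num]
      exact Real.sqrt_lt_sqrt (by norm_num) (by norm_num)
    have hle : (1:ℝ) / Real.sqrt 3 ≤ Real.sqrt 2 / 2 := by
      rw [div_le_div_iff₀ hb3 (by norm_num)]
      nlinarith [h6, h62]
    have hsin4 : (1:ℝ) / Real.sqrt 3 ≤ Real.sin (π/4) := by
      rw [Real.sin_pi_div_four]; exact hle
    have := (Real.arcsin_le_iff_le_sin' (y := π/4) ⟨by linarith, by linarith⟩).mpr hsin4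
    unfold θ₀; linarith

lemma θ₀_sin : Real.sin (θ₀ / 4) = 1 / Real.sqrt 3 := by
  have h1 : (0:ℝ) < 1 / Real.sqrt 3 := by positivity
  have h : θ₀ / 4 = Real.arcsin (1 / Real.sqrt 3) := by unfold θ₀; ring
  rw [h, Real.sin_arcsin (by linarith) inv3_lt_one.le]

theorem stmt_5 :
    IsGreatest ((fun θ => min (2 * Real.cos (θ / 4)) (Real.sqrt 3 * Real.sin (θ / 2))) ''
        Set.Ioc (π / 2) π) (2 * Real.sqrt 2 / Real.sqrt 3) ∧
    ∀ θ ∈ Set.Ioc (π / 2) π,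
      (min (2 * Real.cos (θ / 4)) (Real.sqrt 3 * Real.sin (θ / 2)) =
          2 * Real.sqrt 2 / Real.sqrt 3 ↔
        Real.sin (θ / 4) = 1 / Real.sqrt 3) := by
  have key : ∀ θ ∈ Set.Ioc (π/2) π,
      (min (2 * Real.cos (θ / 4)) (Real.sqrt 3 * Real.sin (θ / 2)) =
          2 * Real.sqrt 2 / Real.sqrt 3 ↔ Real.sin (θ / 4) = 1 / Real.sqrt 3) ∧
      min (2 * Real.cos (θ / 4)) (Real.sqrt 3 * Real.sin (θ / 2)) ≤
          2 * Real.sqrt 2 / Real.sqrt 3 := by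
    intro θ hθ
    obtain ⟨hs, hc⟩ := sc_pos hθ
    rw [half_eq θ]
    have h1 : Real.sin (θ/4) ^ 2 + Real.cos (θ/4) ^ 2 = 1 := Real.sin_sq_add_cos_sq _
    exact aux_min _ _ hs hc h1
  refine ⟨⟨⟨θ₀, θ₀_mem, ?_⟩, ?_⟩, fun θ hθ => (key θ hθ).1⟩
  · exact ((key θ₀ θ₀_mem).1).mpr θ₀_sin
  · rintro x ⟨θ, hθ, rfl⟩
    exact (key θ hθ).2
end

section
/- For every fixed dimension d there exists a constant c > 0 (depending only on d) with the following property: let P be a convex polytope in R^d with wid(P) > 0, and let Δ_P be its witness simplex. Then c·wid(P) ≤ wid(Δ_P) ≤ wid(P). -/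
noncomputable def dirWidth {d : ℕ} (u : EuclideanSpace ℝ (Fin d))
    (A : Set (EuclideanSpace ℝ (Fin d))) : ℝ :=
  sSup ((fun p => (inner ℝ u p : ℝ)) '' A) - sInf ((fun p => (inner ℝ u p : ℝ)) '' A)

noncomputable def setWidth {d : ℕ} (A : Set (EuclideanSpace ℝ (Fin d))) : ℝ :=
  sInf {w | ∃ u : EuclideanSpace ℝ (Fin d), ‖u‖ = 1 ∧ w = dirWidth u A}

/-!
Let `E_i` be the affine span of `v 0, …, v i` and `h_i = dist (v (i+1)) E_i`. Normalising
`v (i+1)` minus its orthogonal projection onto `E_i` gives an orthonormal frame `e_0, …, e_{d-1}`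
(Gram–Schmidt along the flag) in which the edge vectors `v (j+1) - v 0` are triangular:
`⟪e_j, v (j+1) - v 0⟫ = h_j` and `⟪e_i, v (j+1) - v 0⟫ = 0` for `i > j`, while the farthest-point
choice gives `|⟪e_i, w - v 0⟫| ≤ h_i` for every vertex `w` of `P`.

So `P` lies in a slab of width `2 h` in direction `e_i`, where `h = min h_i`, and `h > 0` since
otherwise `P` would be flat. Conversely, for a unit vector `u` the numbers `⟪u, v (j+1) - v 0⟫` are
bounded by `wid_u Δ`; solving the triangular system gives `|⟪e_j, u⟫| h_j ≤ 2 ^ j wid_u Δ`, and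
`1 = ‖u‖ ≤ ∑ |⟪e_j, u⟫|` turns this into `h ≤ (2 ^ d - 1) wid_u Δ`. Hence
`wid P ≤ 2 ^ (d + 1) wid Δ`.
-/

open Finset Metric
open scoped RealInnerProductSpace

section Width

variable {d : ℕ} {A B : Set (EuclideanSpace ℝ (Fin d))} {u : EuclideanSpace ℝ (Fin d)}

theorem abs_inner_sub_le_dirWidth (hA : IsCompact A) {a b : EuclideanSpace ℝ (Fin d)}
    (ha : a ∈ A) (hb : b ∈ A) : |⟪u, a⟫ - ⟪u, b⟫| ≤ dirWidth u A := by
  have hK := hA.image (continuous_const.inner continuous_id : Continuous (⟪u, ·⟫))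
  have hsa := le_csSup hK.bddAbove (Set.mem_image_of_mem _ ha)
  have hsb := le_csSup hK.bddAbove (Set.mem_image_of_mem _ hb)
  have hia := csInf_le hK.bddBelow (Set.mem_image_of_mem _ ha)
  have hib := csInf_le hK.bddBelow (Set.mem_image_of_mem _ hb)
  rw [abs_sub_le_iff, dirWidth]
  constructor <;> linarith

theorem dirWidth_nonneg (hA : IsCompact A) : 0 ≤ dirWidth u A := by
  rcases A.eq_empty_or_nonempty with rfl | ⟨a, ha⟩
  · simp [dirWidth]
  · simpa using abs_inner_sub_le_dirWidth (u := u) hA ha ha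

theorem dirWidth_le_of_abs_inner_sub_le (hA : A.Nonempty) {c r : ℝ}
    (h : ∀ x ∈ A, |⟪u, x⟫ - c| ≤ r) : dirWidth u A ≤ 2 * r := by
  have hsup : sSup ((⟪u, ·⟫) '' A) ≤ c + r :=
    csSup_le (hA.image _) <| Set.forall_mem_image.2 fun x hx => by linarith [(abs_le.1 (h x hx)).2]
  have hinf : c - r ≤ sInf ((⟪u, ·⟫) '' A) :=
    le_csInf (hA.image _) <| Set.forall_mem_image.2 fun x hx => by linarith [(abs_le.1 (h x hx)).1]
  rw [dirWidth]
  linarith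

theorem dirWidth_mono (hB : IsCompact B) (hAB : A ⊆ B) (hA : A.Nonempty) :
    dirWidth u A ≤ dirWidth u B := by
  have hK := hB.image (continuous_const.inner continuous_id : Continuous (⟪u, ·⟫))
  have hsup := csSup_le_csSup hK.bddAbove (hA.image _) (Set.image_mono (f := (⟪u, ·⟫)) hAB)
  have hinf := csInf_le_csInf hK.bddBelow (hA.image _) (Set.image_mono (f := (⟪u, ·⟫)) hAB)
  rw [dirWidth, dirWidth]
  linarith

theorem setWidth_le_dirWidth (hA : IsCompact A) (hu : ‖u‖ = 1) : setWidth A ≤ dirWidth u A :=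
  csInf_le ⟨0, by rintro _ ⟨u, -, rfl⟩; exact dirWidth_nonneg hA⟩ ⟨u, hu, rfl⟩

theorem le_setWidth (hd : d ≠ 0) {w : ℝ} (h : ∀ u, ‖u‖ = 1 → w ≤ dirWidth u A) :
    w ≤ setWidth A := by
  have : NeZero d := ⟨hd⟩
  obtain ⟨u, hu⟩ := exists_norm_eq (EuclideanSpace ℝ (Fin d)) zero_le_one
  exact le_csInf ⟨_, u, hu, rfl⟩ <| by rintro _ ⟨u, hu, rfl⟩; exact h u hu

theorem setWidth_fin_zero (A : Set (EuclideanSpace ℝ (Fin 0))) : setWidth A = 0 := by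
  have : {w | ∃ u : EuclideanSpace ℝ (Fin 0), ‖u‖ = 1 ∧ w = dirWidth u A} = ∅ := by
    refine Set.eq_empty_of_forall_notMem ?_
    rintro _ ⟨u, hu, -⟩
    simp [Subsingleton.elim u 0] at hu
  rw [setWidth, this, Real.sInf_empty]

theorem setWidth_mono (hA : IsCompact A) (hB : IsCompact B) (hAB : A ⊆ B) (hne : A.Nonempty) :
    setWidth A ≤ setWidth B := by
  rcases eq_or_ne d 0 with rfl | hd
  · simp [setWidth_fin_zero]
  · exact le_setWidth hd fun u hu =>
      (setWidth_le_dirWidth hA hu).trans (dirWidth_mono hB hAB hne)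

theorem setWidth_convexHull_le {s : Set (EuclideanSpace ℝ (Fin d))} (hs : s.Finite)
    (hne : s.Nonempty) (hu : ‖u‖ = 1) {c r : ℝ} (h : ∀ w ∈ s, |⟪u, w⟫ - c| ≤ r) :
    setWidth (convexHull ℝ s) ≤ 2 * r := by
  have hslab : Convex ℝ ((⟪u, ·⟫) ⁻¹' closedBall c r) :=
    (convex_closedBall c r).linear_preimage (innerₛₗ ℝ u)
  have hsub : convexHull ℝ s ⊆ (⟪u, ·⟫) ⁻¹' closedBall c r :=
    convexHull_min (fun w hw => by simpa [Real.dist_eq] using h w hw) hslab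
  refine (setWidth_le_dirWidth (hs.isCompact_convexHull (𝕜 := ℝ)) hu).trans ?_
  exact dirWidth_le_of_abs_inner_sub_le (hne.mono (subset_convexHull ℝ s))
    fun x hx => by simpa [Real.dist_eq] using hsub hx

end Width

theorem Fin.sum_Iio_two_pow {n : ℕ} (j : Fin n) :
    ∑ i ∈ Iio j, (2 : ℝ) ^ (i : ℕ) = 2 ^ (j : ℕ) - 1 := by
  have h := sum_map (Iio j) Fin.valEmbedding (fun i => (2 : ℝ) ^ i)
  rw [Fin.map_valEmbedding_Iio, Nat.Iio_eq_range, geom_sum_eq (by norm_num)] at h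
  norm_num at h
  exact h.symm

theorem Fin.sum_univ_two_pow (n : ℕ) : ∑ i : Fin n, (2 : ℝ) ^ (i : ℕ) = 2 ^ n - 1 := by
  rw [Fin.sum_univ_eq_sum_range (fun i => (2 : ℝ) ^ i), geom_sum_eq (by norm_num)]
  norm_num

theorem abs_mul_diag_le_of_triangular {n : ℕ} {a : Fin n → ℝ} {M : Fin n → Fin n → ℝ} {ε : ℝ}
    (hzero : ∀ i j, j < i → M i j = 0) (hdom : ∀ i j, i < j → |M i j| ≤ |M i i|)
    (hsum : ∀ j, |∑ i, a i * M i j| ≤ ε) (j : Fin n) :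
    |a j * M j j| ≤ 2 ^ (j : ℕ) * ε := by
  induction j using WellFoundedLT.induction with
  | _ j ih =>
  have hsplit : ∑ i, a i * M i j = a j * M j j + ∑ i ∈ Iio j, a i * M i j := by
    rw [← sum_subset (subset_univ (Iic j)), ← Iio_insert, sum_insert (by simp)]
    intro i _ hi
    rw [hzero i j (not_le.1 (by simpa using hi)), mul_zero]
  have hrest : |∑ i ∈ Iio j, a i * M i j| ≤ ∑ i ∈ Iio j, 2 ^ (i : ℕ) * ε := by
    refine (abs_sum_le_sum_abs _ _).trans (sum_le_sum fun i hi => ?_)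
    have hij : i < j := mem_Iio.1 hi
    calc |a i * M i j| ≤ |a i * M i i| := by
          rw [abs_mul, abs_mul]; exact mul_le_mul_of_nonneg_left (hdom i j hij) (abs_nonneg _)
      _ ≤ 2 ^ (i : ℕ) * ε := ih i hij
  rw [← sum_mul, Fin.sum_Iio_two_pow] at hrest
  have hdiag : a j * M j j = ∑ i, a i * M i j - ∑ i ∈ Iio j, a i * M i j := by
    rw [hsplit, add_sub_cancel_right]
  calc |a j * M j j| ≤ |∑ i, a i * M i j| + |∑ i ∈ Iio j, a i * M i j| := hdiag ▸ abs_sub _ _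
    _ ≤ ε + (2 ^ (j : ℕ) - 1) * ε := add_le_add (hsum j) hrest
    _ = 2 ^ (j : ℕ) * ε := by ring

section InnerProduct

variable {E : Type*} [NormedAddCommGroup E] [InnerProductSpace ℝ E]

theorem Submodule.exists_mem_orthogonal_norm_eq_one [FiniteDimensional ℝ E] (K : Submodule ℝ E)
    (hK : Module.finrank ℝ K < Module.finrank ℝ E) : ∃ u ∈ Kᗮ, ‖u‖ = 1 := by
  have : Nontrivial Kᗮ := Submodule.nontrivial_iff_ne_bot.2 fun h => hK.ne <| by
    rw [Submodule.orthogonal_eq_bot_iff.1 h, finrank_top]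
  obtain ⟨u, hu⟩ := exists_norm_eq Kᗮ zero_le_one
  exact ⟨u, u.2, hu⟩

theorem OrthonormalBasis.norm_le_sum_abs_inner {ι : Type*} [Fintype ι]
    (b : OrthonormalBasis ι ℝ E) (x : E) : ‖x‖ ≤ ∑ i, |⟪b i, x⟫| := by
  conv_lhs => rw [← b.sum_repr' x]
  refine (norm_sum_le _ _).trans_eq (sum_congr rfl fun i _ => ?_)
  rw [norm_smul, b.orthonormal.1 i, mul_one, Real.norm_eq_abs]

theorem Orthonormal.exists_orthonormalBasis_eq [FiniteDimensional ℝ E] {n : ℕ} {e : Fin n → E}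
    (he : Orthonormal ℝ e) (hn : Module.finrank ℝ E = n) :
    ∃ b : OrthonormalBasis (Fin n) ℝ E, ⇑b = e :=
  ⟨.mk he (he.linearIndependent.span_eq_top_of_card_eq_finrank' (by simp [hn])).ge,
    OrthonormalBasis.coe_mk _ _⟩

theorem OrthonormalBasis.le_two_pow_mul_of_triangular {n : ℕ}
    (b : OrthonormalBasis (Fin n) ℝ E) {x : Fin n → E} {u : E} {c ε : ℝ}
    (hzero : ∀ i j, j < i → ⟪b i, x j⟫ = 0)
    (hdom : ∀ i j, i < j → |⟪b i, x j⟫| ≤ ⟪b i, x i⟫)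
    (hc : ∀ i, c ≤ ⟪b i, x i⟫) (hc0 : 0 ≤ c) (hu : ‖u‖ = 1) (hε : ∀ j, |⟪u, x j⟫| ≤ ε) :
    c ≤ (2 ^ n - 1) * ε := by
  have hcoord : ∀ j, |⟪b j, u⟫ * ⟪b j, x j⟫| ≤ 2 ^ (j : ℕ) * ε := by
    refine abs_mul_diag_le_of_triangular hzero
      (fun i j hij => (hdom i j hij).trans (le_abs_self _)) fun j => ?_
    have hexpand : ∑ i, ⟪b i, u⟫ * ⟪b i, x j⟫ = ⟪u, x j⟫ := by
      simpa only [real_inner_comm u] using b.sum_inner_mul_inner u (x j)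
    rw [hexpand]
    exact hε j
  calc c = c * ‖u‖ := by rw [hu, mul_one]
    _ ≤ c * ∑ j, |⟪b j, u⟫| := mul_le_mul_of_nonneg_left (b.norm_le_sum_abs_inner u) hc0
    _ = ∑ j, |⟪b j, u⟫| * c := by rw [mul_sum]; simp_rw [mul_comm c]
    _ ≤ ∑ j, |⟪b j, u⟫ * ⟪b j, x j⟫| := sum_le_sum fun j _ => by
        rw [abs_mul, abs_of_nonneg (hc0.trans (hc j))]
        exact mul_le_mul_of_nonneg_left (hc j) (abs_nonneg _)
    _ ≤ ∑ j : Fin n, 2 ^ (j : ℕ) * ε := sum_le_sum fun j _ => hcoord j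
    _ = (2 ^ n - 1) * ε := by rw [← sum_mul, Fin.sum_univ_two_pow]

theorem abs_inner_sub_le_infDist {s : AffineSubspace ℝ E} {e q : E} (he : ‖e‖ = 1)
    (hes : e ∈ s.directionᗮ) (hq : q ∈ s) (w : E) : |⟪e, w - q⟫| ≤ infDist w s := by
  refine (le_infDist ⟨q, hq⟩).2 fun y hy => ?_
  have hyq : ⟪e, y - q⟫ = 0 :=
    Submodule.inner_left_of_mem_orthogonal (AffineSubspace.vsub_mem_direction hy hq) hes
  calc |⟪e, w - q⟫| = |⟪e, w - y⟫| := by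
        rw [show w - q = (w - y) + (y - q) by abel, inner_add_right, hyq, add_zero]
    _ ≤ ‖e‖ * ‖w - y‖ := abs_real_inner_le_norm e (w - y)
    _ = dist w y := by rw [he, one_mul, dist_eq_norm]

section Witness

variable {n : ℕ} (v : Fin (n + 1) → E)

noncomputable def witnessFlat (i : Fin (n + 1)) : AffineSubspace ℝ E :=
  affineSpan ℝ (v '' {j | j ≤ i})

noncomputable def witnessHeight (i : Fin n) : ℝ := infDist (v i.succ) (witnessFlat v i.castSucc)

/-- The defining property of the witness simplex, without the lexicographic tie-breaking. -/
def IsFarthestSequence (V : Set E) : Prop :=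
  ∀ i : Fin n, ∀ w ∈ V, infDist w (witnessFlat v i.castSucc) ≤ witnessHeight v i

theorem mem_witnessFlat {i k : Fin (n + 1)} (h : k ≤ i) : v k ∈ witnessFlat v i :=
  subset_affineSpan ℝ _ ⟨k, h, rfl⟩

instance (i : Fin (n + 1)) : Nonempty (witnessFlat v i) :=
  ⟨⟨v 0, mem_witnessFlat v (Fin.zero_le i)⟩⟩

theorem witnessFlat_mono {i j : Fin (n + 1)} (h : i ≤ j) : witnessFlat v i ≤ witnessFlat v j :=
  affineSpan_mono ℝ (Set.image_mono fun _ hk => le_trans hk h)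

theorem finrank_direction_witnessFlat_le (i : Fin (n + 1)) :
    Module.finrank ℝ (witnessFlat v i).direction ≤ i := by
  classical
  rw [witnessFlat, direction_affineSpan,
    show v '' {j | j ≤ i} = ((Iic i).image v : Set E) by simp [Set.Iic]]
  exact finrank_vectorSpan_image_finset_le ℝ v (Iic i) (by simp)

theorem witnessHeight_nonneg (i : Fin n) : 0 ≤ witnessHeight v i := infDist_nonneg

variable [FiniteDimensional ℝ E]

noncomputable def witnessNormal (i : Fin n) : E :=
  (witnessHeight v i)⁻¹ • (v i.succ - EuclideanGeometry.orthogonalProjection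
    (witnessFlat v i.castSucc) (v i.succ))

variable {v}

theorem norm_sub_orthogonalProjection_witnessFlat (i : Fin n) :
    ‖v i.succ - EuclideanGeometry.orthogonalProjection (witnessFlat v i.castSucc) (v i.succ)‖ =
      witnessHeight v i := by
  rw [← dist_eq_norm, EuclideanGeometry.dist_orthogonalProjection_eq_infDist, witnessHeight]

theorem witnessNormal_mem_orthogonal (i : Fin n) :
    witnessNormal v i ∈ (witnessFlat v i.castSucc).directionᗮ :=
  Submodule.smul_mem _ _ <|
    EuclideanGeometry.vsub_orthogonalProjection_mem_direction_orthogonal _ (v i.succ)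

theorem witnessNormal_mem_direction {i j : Fin n} (hij : i < j) :
    witnessNormal v i ∈ (witnessFlat v j.castSucc).direction :=
  Submodule.smul_mem _ _ <| AffineSubspace.vsub_mem_direction
    (mem_witnessFlat v (Fin.succ_le_castSucc_iff.2 hij))
    (witnessFlat_mono v (Fin.castSucc_le_castSucc_iff.2 hij.le)
      (EuclideanGeometry.orthogonalProjection_mem _))

theorem norm_witnessNormal {i : Fin n} (hi : witnessHeight v i ≠ 0) :
    ‖witnessNormal v i‖ = 1 := by
  rw [witnessNormal, norm_smul, norm_sub_orthogonalProjection_witnessFlat, norm_inv,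
    Real.norm_of_nonneg (witnessHeight_nonneg v i), inv_mul_cancel₀ hi]

theorem orthonormal_witnessNormal (h : ∀ i, witnessHeight v i ≠ 0) :
    Orthonormal ℝ (witnessNormal v) := by
  refine ⟨fun i => norm_witnessNormal (h i), fun i j hij => ?_⟩
  rcases hij.lt_or_gt with hij | hji
  · exact Submodule.inner_right_of_mem_orthogonal (witnessNormal_mem_direction hij)
      (witnessNormal_mem_orthogonal j)
  · exact Submodule.inner_left_of_mem_orthogonal (witnessNormal_mem_direction hji)
      (witnessNormal_mem_orthogonal i)

theorem inner_witnessNormal_sub_eq_zero {i : Fin n} {k : Fin (n + 1)} (hk : k ≤ i.castSucc) :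
    ⟪witnessNormal v i, v k - v 0⟫ = 0 :=
  Submodule.inner_left_of_mem_orthogonal
    (AffineSubspace.vsub_mem_direction (mem_witnessFlat v hk) (mem_witnessFlat v (Fin.zero_le _)))
    (witnessNormal_mem_orthogonal i)

theorem inner_witnessNormal_succ_sub {i : Fin n} (hi : witnessHeight v i ≠ 0) :
    ⟪witnessNormal v i, v i.succ - v 0⟫ = witnessHeight v i := by
  set q := EuclideanGeometry.orthogonalProjection (witnessFlat v i.castSucc) (v i.succ)
  have hq : ⟪witnessNormal v i, (q : E) - v 0⟫ = 0 :=
    Submodule.inner_left_of_mem_orthogonal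
      (AffineSubspace.vsub_mem_direction (EuclideanGeometry.orthogonalProjection_mem _)
        (mem_witnessFlat v (Fin.zero_le _)))
      (witnessNormal_mem_orthogonal i)
  rw [show v i.succ - v 0 = (v i.succ - q) + ((q : E) - v 0) by abel, inner_add_right, hq,
    add_zero, witnessNormal, real_inner_smul_left, real_inner_self_eq_norm_sq,
    norm_sub_orthogonalProjection_witnessFlat, sq, inv_mul_cancel_left₀ hi]

theorem abs_inner_witnessNormal_sub_le {i : Fin n} (hi : witnessHeight v i ≠ 0) (w : E) :
    |⟪witnessNormal v i, w - v 0⟫| ≤ infDist w (witnessFlat v i.castSucc) :=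
  abs_inner_sub_le_infDist (norm_witnessNormal hi) (witnessNormal_mem_orthogonal i)
    (mem_witnessFlat v (Fin.zero_le _)) w

theorem witnessHeight_le_of_isFarthestSequence {V : Set E} (hV : IsFarthestSequence v V)
    (hmem : ∀ k, v k ∈ V) (hh : ∀ i, witnessHeight v i ≠ 0) (hn : Module.finrank ℝ E = n)
    {i : Fin n} (hmin : ∀ j, witnessHeight v i ≤ witnessHeight v j) {u : E} (hu : ‖u‖ = 1)
    {ε : ℝ} (hε : ∀ k, |⟪u, v k - v 0⟫| ≤ ε) :
    witnessHeight v i ≤ (2 ^ n - 1) * ε := by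
  obtain ⟨b, hb⟩ := (orthonormal_witnessNormal hh).exists_orthonormalBasis_eq hn
  refine b.le_two_pow_mul_of_triangular (x := fun l => v l.succ - v 0) (fun k l hlk => ?_)
    (fun k l _ => ?_) (fun l => ?_) (witnessHeight_nonneg v i) hu (fun l => hε l.succ)
  · rw [hb]
    exact inner_witnessNormal_sub_eq_zero (Fin.succ_le_castSucc_iff.2 hlk)
  · rw [hb, inner_witnessNormal_succ_sub (hh k)]
    exact (abs_inner_witnessNormal_sub_le (hh k) _).trans (hV k _ (hmem l.succ))
  · rw [hb, inner_witnessNormal_succ_sub (hh l)]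
    exact hmin l

end Witness

end InnerProduct

section Euclidean

variable {d : ℕ} {V : Finset (EuclideanSpace ℝ (Fin d))}
  {v : Fin (d + 1) → EuclideanSpace ℝ (Fin d)}

theorem witnessHeight_pos (hV : IsFarthestSequence v V) (hv0 : v 0 ∈ V)
    (hpos : 0 < setWidth (convexHull ℝ (V : Set (EuclideanSpace ℝ (Fin d))))) (i : Fin d) :
    0 < witnessHeight v i := by
  by_contra! hle
  set S := witnessFlat v i.castSucc
  have hv0S : v 0 ∈ S := mem_witnessFlat v (Fin.zero_le _)
  have hVS : ∀ w ∈ V, w ∈ S := fun w hw =>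
    (S.closed_of_finiteDimensional.mem_iff_infDist_zero ⟨_, hv0S⟩).2
      (le_antisymm ((hV i w hw).trans hle) infDist_nonneg)
  obtain ⟨u, hu, hu1⟩ := S.direction.exists_mem_orthogonal_norm_eq_one <|
    (finrank_direction_witnessFlat_le v _).trans_lt (by simp)
  have hflat : ∀ w ∈ (V : Set (EuclideanSpace ℝ (Fin d))), |⟪u, w⟫ - ⟪u, v 0⟫| ≤ 0 := by
    intro w hw
    have hperp : ⟪u, w - v 0⟫ = 0 :=
      Submodule.inner_left_of_mem_orthogonal
        (AffineSubspace.vsub_mem_direction (hVS w hw) hv0S) hu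
    rw [← inner_sub_right, hperp, abs_zero]
  linarith [setWidth_convexHull_le V.finite_toSet ⟨_, hv0⟩ hu1 hflat]

theorem setWidth_convexHull_le_two_pow_mul (hV : IsFarthestSequence v V) (hmem : ∀ k, v k ∈ V)
    (hpos : 0 < setWidth (convexHull ℝ (V : Set (EuclideanSpace ℝ (Fin d))))) :
    setWidth (convexHull ℝ (V : Set (EuclideanSpace ℝ (Fin d)))) ≤
      2 ^ (d + 1) * setWidth (convexHull ℝ (Set.range v)) := by
  have hd : d ≠ 0 := by
    rintro rfl
    simp [setWidth_fin_zero] at hpos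
  have : Nonempty (Fin d) := ⟨⟨0, Nat.pos_of_ne_zero hd⟩⟩
  have hh := witnessHeight_pos hV (hmem 0) hpos
  obtain ⟨i, hmin⟩ := Finite.exists_min (witnessHeight v)
  have hΔ : IsCompact (convexHull ℝ (Set.range v)) :=
    (Set.finite_range v).isCompact_convexHull (𝕜 := ℝ)
  have hbox :
      setWidth (convexHull ℝ (V : Set (EuclideanSpace ℝ (Fin d)))) ≤ 2 * witnessHeight v i :=
    setWidth_convexHull_le V.finite_toSet ⟨_, hmem 0⟩ (norm_witnessNormal (hh i).ne')
      fun w hw => by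
        rw [← inner_sub_right]
        exact (abs_inner_witnessNormal_sub_le (hh i).ne' w).trans (hV i w hw)
  have hsimplex : witnessHeight v i ≤ 2 ^ d * setWidth (convexHull ℝ (Set.range v)) := by
    rw [← div_le_iff₀' (by positivity)]
    refine le_setWidth hd fun u hu => ?_
    rw [div_le_iff₀' (by positivity)]
    calc witnessHeight v i
        ≤ (2 ^ d - 1) * dirWidth u (convexHull ℝ (Set.range v)) :=
          witnessHeight_le_of_isFarthestSequence hV hmem (fun j => (hh j).ne')
            finrank_euclideanSpace_fin hmin hu fun k => by
              rw [inner_sub_right]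
              exact abs_inner_sub_le_dirWidth hΔ (subset_convexHull ℝ _ ⟨k, rfl⟩)
                (subset_convexHull ℝ _ ⟨0, rfl⟩)
      _ ≤ 2 ^ d * dirWidth u (convexHull ℝ (Set.range v)) :=
          mul_le_mul_of_nonneg_right (by linarith) (dirWidth_nonneg hΔ)
  calc setWidth (convexHull ℝ (V : Set (EuclideanSpace ℝ (Fin d))))
      _ ≤ 2 * witnessHeight v i := hbox
      _ ≤ 2 * (2 ^ d * setWidth (convexHull ℝ (Set.range v))) := by gcongr
      _ = 2 ^ (d + 1) * setWidth (convexHull ℝ (Set.range v)) := by ring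

end Euclidean

theorem stmt_9 (d : ℕ) :
    ∃ c : ℝ, 0 < c ∧
      ∀ (V : Finset (EuclideanSpace ℝ (Fin d)))
        (v : Fin (d + 1) → EuclideanSpace ℝ (Fin d)),
        (∀ i, v i ∈ V) →
        (∀ i : Fin d, ∀ w ∈ V,
          Metric.infDist w (affineSpan ℝ (v '' {j | j ≤ i.castSucc}) : Set _) ≤
            Metric.infDist (v i.succ) (affineSpan ℝ (v '' {j | j ≤ i.castSucc}) : Set _)) →
        0 < setWidth (convexHull ℝ (V : Set (EuclideanSpace ℝ (Fin d)))) →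
        c * setWidth (convexHull ℝ (V : Set (EuclideanSpace ℝ (Fin d)))) ≤
            setWidth (convexHull ℝ (Set.range v)) ∧
          setWidth (convexHull ℝ (Set.range v)) ≤
            setWidth (convexHull ℝ (V : Set (EuclideanSpace ℝ (Fin d)))) := by
  refine ⟨(2 ^ (d + 1))⁻¹, by positivity, fun V v hmem hV hpos => ⟨?_, ?_⟩⟩
  · rw [inv_mul_le_iff₀ (by positivity)]
    exact setWidth_convexHull_le_two_pow_mul hV hmem hpos
  · exact setWidth_mono ((Set.finite_range v).isCompact_convexHull (𝕜 := ℝ))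
      (V.finite_toSet.isCompact_convexHull (𝕜 := ℝ))
      (convexHull_mono (Set.range_subset_iff.2 hmem)) ⟨v 0, subset_convexHull ℝ _ ⟨0, rfl⟩⟩
end

section
/- Let Q ⊆ R^d be a convex body contained in the slab {z : |z_i| ≤ M} (the i-th coordinate bounded by M in absolute value), and let Δ ⊆ Q be a convex subset containing two points whose i-th coordinates differ by 2M', with M' ≤ M. Let u = (0,…,0,u_i,…,u_d) be a unit vector with u_i ≥ 0, and let u' be the unit vector obtained by zeroing the i-th coordinate of u and renormalizing (assuming u_i < 1). If wid_{u'}(Δ) ≥ W and u_i·M ≤ W/5 and M ≥ wid(Q)/2·(1/1), then wid_u(Δ) ≥ sqrt(1−u_i^2)·W − 2 u_i M. -/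
theorem mul_sSup_sub_sInf_sub_le_of_forall {α : Type*} {S : Set α} (hS : S.Nonempty)
    {f g : α → ℝ} (hgA : BddAbove (g '' S)) (hgB : BddBelow (g '' S)) {a b : ℝ} (ha : 0 ≤ a)
    (h : ∀ p ∈ S, ∀ q ∈ S, a * (f p - f q) - b ≤ g p - g q) :
    a * (sSup (f '' S) - sInf (f '' S)) - b ≤ sSup (g '' S) - sInf (g '' S) := by
  set w := sSup (g '' S) - sInf (g '' S)
  have hw : ∀ p ∈ S, ∀ q ∈ S, a * f p ≤ w + b + a * f q := fun p hp q hq => by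
    have := h p hp q hq
    have := le_csSup hgA (Set.mem_image_of_mem g hp)
    have := csInf_le hgB (Set.mem_image_of_mem g hq)
    linarith
  have hsup : ∀ q ∈ S, a * sSup (f '' S) ≤ w + b + a * f q := fun q hq => by
    rw [← smul_eq_mul, ← Real.sSup_smul_of_nonneg ha]
    refine csSup_le (hS.image f).smul_set ?_
    rintro _ ⟨_, ⟨p, hp, rfl⟩, rfl⟩
    exact hw p hp q hq
  have hinf : a * sSup (f '' S) - w - b ≤ a * sInf (f '' S) := by
    rw [← smul_eq_mul a (sInf _), ← Real.sInf_smul_of_nonneg ha]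
    refine le_csInf (hS.image f).smul_set ?_
    rintro _ ⟨_, ⟨q, hq, rfl⟩, rfl⟩
    have := hsup q hq
    simp only [smul_eq_mul]
    linarith
  linarith

section Width

variable {d : ℕ}

theorem mul_dirWidth_sub_le_dirWidth {Δ : Set (EuclideanSpace ℝ (Fin d))} (hΔ : Δ.Nonempty)
    {u v : EuclideanSpace ℝ (Fin d)} (hA : BddAbove ((fun p => (inner ℝ u p : ℝ)) '' Δ))
    (hB : BddBelow ((fun p => (inner ℝ u p : ℝ)) '' Δ)) {a b : ℝ} (ha : 0 ≤ a)
    (h : ∀ p ∈ Δ, ∀ q ∈ Δ,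
      a * (inner ℝ v p - inner ℝ v q) - b ≤ (inner ℝ u p : ℝ) - inner ℝ u q) :
    a * dirWidth v Δ - b ≤ dirWidth u Δ :=
  mul_sSup_sub_sInf_sub_le_of_forall hΔ hA hB ha h

theorem inner_eq_mul_inner_add_of_coord_eq_zero {i : Fin d} {u u' : EuclideanSpace ℝ (Fin d)}
    {c : ℝ} (hc : c ≠ 0) (hu'i : u' i = 0) (hu'j : ∀ j, j ≠ i → u' j = u j / c)
    (p : EuclideanSpace ℝ (Fin d)) :
    (inner ℝ u p : ℝ) = c * inner ℝ u' p + u i * p i := by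
  simp only [PiLp.inner_apply, RCLike.inner_apply, conj_trivial, Finset.mul_sum]
  have hterm : ∀ j ∈ Finset.univ,
      p j * u j = c * (p j * u' j) + if j = i then u i * p i else 0 := by
    intro j _
    by_cases hj : j = i
    · subst hj
      simp [hu'i, mul_comm]
    · rw [hu'j j hj, if_neg hj, add_zero]
      field_simp
  rw [Finset.sum_congr rfl hterm, Finset.sum_add_distrib, Finset.sum_ite_eq' Finset.univ i]
  simp

end Width

theorem stmt_10_general {d : ℕ} (i : Fin d) (Q Δ : Set (EuclideanSpace ℝ (Fin d)))
    (M W : ℝ)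
    (hQc : IsCompact Q)
    (hΔne : Δ.Nonempty) (hΔQ : Δ ⊆ Q)
    (hslab : ∀ z ∈ Q, |z i| ≤ M)
    (u u' : EuclideanSpace ℝ (Fin d))
    (hui0 : 0 ≤ u i) (hui1 : u i < 1)
    (hu'i : u' i = 0)
    (hu'j : ∀ j : Fin d, j ≠ i → u' j = u j / Real.sqrt (1 - (u i) ^ 2))
    (hW : W ≤ dirWidth u' Δ) :
    Real.sqrt (1 - (u i) ^ 2) * W - 2 * (u i) * M ≤ dirWidth u Δ := by
  set s := Real.sqrt (1 - (u i) ^ 2)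
  have hs : 0 < s := Real.sqrt_pos.mpr (by nlinarith)
  have hinner := inner_eq_mul_inner_add_of_coord_eq_zero hs.ne' hu'i hu'j
  have hcont : Continuous fun p : EuclideanSpace ℝ (Fin d) => (inner ℝ u p : ℝ) :=
    continuous_const.inner continuous_id
  have hA := ((hQc.image hcont).bddAbove).mono (Set.image_mono hΔQ)
  have hB := ((hQc.image hcont).bddBelow).mono (Set.image_mono hΔQ)
  calc s * W - 2 * u i * M ≤ s * dirWidth u' Δ - 2 * u i * M := by gcongr
    _ ≤ dirWidth u Δ := by
      refine mul_dirWidth_sub_le_dirWidth hΔne hA hB hs.le fun p hp q hq => ?_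
      have hp := abs_le.mp (hslab p (hΔQ hp))
      have hq := abs_le.mp (hslab q (hΔQ hq))
      rw [hinner p, hinner q]
      nlinarith

theorem stmt_10 {d : ℕ} (i : Fin d) (Q Δ : Set (EuclideanSpace ℝ (Fin d)))
    (M M' W : ℝ)
    (hQc : IsCompact Q) (hQconv : Convex ℝ Q)
    (hΔconv : Convex ℝ Δ) (hΔne : Δ.Nonempty) (hΔQ : Δ ⊆ Q)
    (hslab : ∀ z ∈ Q, |z i| ≤ M)
    (hM' : M' ≤ M)
    (hpts : ∃ p ∈ Δ, ∃ q ∈ Δ, p i - q i = 2 * M')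
    (u u' : EuclideanSpace ℝ (Fin d))
    (hu : ‖u‖ = 1) (huzero : ∀ j : Fin d, (j : ℕ) < (i : ℕ) → u j = 0)
    (hui0 : 0 ≤ u i) (hui1 : u i < 1)
    (hu' : ‖u'‖ = 1) (hu'i : u' i = 0)
    (hu'j : ∀ j : Fin d, j ≠ i → u' j = u j / Real.sqrt (1 - (u i) ^ 2))
    (hW : W ≤ dirWidth u' Δ)
    (h5 : u i * M ≤ W / 5)
    (hM : setWidth Q / 2 ≤ M) :
    Real.sqrt (1 - (u i) ^ 2) * W - 2 * (u i) * M ≤ dirWidth u Δ :=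
  stmt_10_general i Q Δ M W hQc hΔne hΔQ hslab u u' hui0 hui1 hu'i hu'j hW
end

section
/- Let Y be a finite set of points in R^d in general position with |Y| ≥ d+1, let y_0,…,y_k ∈ Y with 0 ≤ k ≤ d−1, and let Δ be the k-simplex with vertices y_0,…,y_k. Let H be the linear span of {y_i − y_0 : 1 ≤ i ≤ k}, H* its orthogonal complement, ρ : R^d → H* the orthogonal projection, Y* = ρ(Y), and ŷ = ρ(y_0) = … = ρ(y_k). Then Δ is a face of the convex hull of Y if and only if ŷ is a vertex (extreme point) of the convex hull of Y* in H*. -/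
/-!
Let `f` be the orthogonal projection onto `Hᗮ`. Its kernel is `H`, so its fibre through `ŷ` is the
affine hull of the `y i`, and by general position the only points of `Y` there are the `y i`.

If `ŷ` is extreme, the part of `conv Y` over `ŷ` is a face. A face of `conv Y` is the convex hull
of the points of `Y` it contains, here the `y i`, so this face is `Δ`.

If `Δ` is a face and `ŷ` lies in an open segment `(f a, f b)` with `a, b ∈ conv Y`, the matching
point `x` of `(a, b)` lies over `ŷ`, so it differs from the barycentre `c` of `Δ` by a vector of
`H`. Since `c` is interior to `Δ` relative to `y 0 + H`, it lies in an open segment from `x` to a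
point of `Δ`. Hence `x ∈ Δ`, then `a ∈ Δ`, and so `f a = ŷ`.
-/

open Set

section Faces

variable {𝕜 E F : Type*} [Field 𝕜] [LinearOrder 𝕜] [IsStrictOrderedRing 𝕜]
  [AddCommGroup E] [Module 𝕜 E] [AddCommGroup F] [Module 𝕜 F]

theorem IsExtreme.subset_convexHull_inter {S D : Set E} (h : IsExtreme 𝕜 (convexHull 𝕜 S) D) :
    D ⊆ convexHull 𝕜 (S ∩ D) := by
  intro x hxD
  have hout : convexHull 𝕜 (S \ D) ⊆ convexHull 𝕜 S \ D :=
    convexHull_min (sdiff_subset_sdiff_left (subset_convexHull 𝕜 S))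
      (h.convex_sdiff (convex_convexHull 𝕜 S))
  rcases (S \ D).eq_empty_or_nonempty with hSD | hSD
  · rw [inter_eq_left.2 (sdiff_eq_empty.1 hSD)]
    exact h.1 hxD
  rcases (S ∩ D).eq_empty_or_nonempty with hSD' | hSD'
  · rw [← inter_union_sdiff S D, hSD', empty_union] at h
    exact absurd hxD (hout (h.1 hxD)).2
  have hx := h.1 hxD
  rw [← inter_union_sdiff S D, convexHull_union hSD' hSD, mem_convexJoin] at hx
  obtain ⟨p, hp, q, hq, hx⟩ := hx
  rw [← insert_endpoints_openSegment] at hx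
  rcases hx with rfl | rfl | hx
  · exact hp
  · exact absurd hxD (hout hq).2
  · exact absurd (h.right_mem_of_mem_openSegment (convexHull_mono inter_subset_left hp)
      (hout hq).1 hxD hx) (hout hq).2

theorem isExtreme_inter_preimage_of_mem_extremePoints (f : E →ₗ[𝕜] F) {C : Set E} {p : F}
    (hp : p ∈ (f '' C).extremePoints 𝕜) : IsExtreme 𝕜 C (C ∩ f ⁻¹' {p}) := by
  refine ⟨inter_subset_left, fun x₁ hx₁ x₂ hx₂ x hx hseg => ⟨hx₁, ?_⟩⟩
  have hfseg : p ∈ openSegment 𝕜 (f x₁) (f x₂) := by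
    rw [← hx.2, ← f.coe_toAffineMap, ← image_openSegment]
    exact mem_image_of_mem _ hseg
  exact hp.2 (mem_image_of_mem f hx₁) (mem_image_of_mem f hx₂) hfseg

theorem mem_openSegment_add_smul_sub (x c : E) {ε : 𝕜} (hε : 0 < ε) :
    c ∈ openSegment 𝕜 x (c + ε • (c - x)) := by
  have hε' : 0 < 1 + ε := by positivity
  refine ⟨ε / (1 + ε), 1 / (1 + ε), by positivity, by positivity, by field_simp; ring, ?_⟩
  match_scalars
  · ring
  · field_simp

/-- `hker` says that `c` is an interior point of the face `D` relative to the directions in which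
`f` is constant. -/
theorem mem_extremePoints_image_of_isExtreme (f : E →ₗ[𝕜] F) {C D : Set E} {c : E}
    (hC : Convex 𝕜 C) (hD : IsExtreme 𝕜 C D) (hc : c ∈ D) (hfD : ∀ x ∈ D, f x = f c)
    (hker : ∀ v ∈ LinearMap.ker f, ∃ ε : 𝕜, 0 < ε ∧ c + ε • v ∈ D) :
    f c ∈ (f '' C).extremePoints 𝕜 := by
  refine ⟨mem_image_of_mem f (hD.1 hc), ?_⟩
  rintro _ ⟨a, ha, rfl⟩ _ ⟨b, hb, rfl⟩ ⟨s, t, hs, ht, hst, hab⟩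
  set x := s • a + t • b with hx
  have hxC : x ∈ C := hC ha hb hs.le ht.le hst
  have hfx : f (c - x) = 0 := by simp [x, ← hab]
  obtain ⟨ε, hε, hw⟩ := hker (c - x) hfx
  have hxD : x ∈ D := hD.2 hxC (hD.1 hw) hc (mem_openSegment_add_smul_sub x c hε)
  exact hfD a (hD.2 ha hb hxD ⟨s, t, hs, ht, hst, hx.symm⟩)

end Faces

section Simplex

variable {ι E : Type*} [Fintype ι] [AddCommGroup E] [Module ℝ E]

theorem exists_pos_add_smul_mem_convexHull (p : ι → E) {w μ : ι → ℝ} (hw : ∀ i, 0 < w i)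
    (hw₁ : ∑ i, w i = 1) (hμ : ∑ i, μ i = 0) :
    ∃ ε : ℝ, 0 < ε ∧ ∑ i, w i • p i + ε • ∑ i, μ i • p i ∈ convexHull ℝ (range p) := by
  have hnonneg : ∀ᶠ ε in nhds (0 : ℝ), ∀ i, 0 ≤ w i + ε * μ i := by
    refine Filter.eventually_all.2 fun i => ?_
    have hlim : Filter.Tendsto (fun ε : ℝ => w i + ε * μ i) (nhds 0) (nhds (w i)) :=
      (continuous_const.add (continuous_id.mul continuous_const)).tendsto' 0 (w i) (by simp)
    exact (hlim.eventually (lt_mem_nhds (hw i))).mono fun _ h => h.le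
  obtain ⟨ε, hε, hε0⟩ :=
    ((hnonneg.filter_mono nhdsWithin_le_nhds).and (self_mem_nhdsWithin (s := Ioi 0))).exists
  refine ⟨ε, hε0, ?_⟩
  have hsum : ∑ i, (w i + ε * μ i) = 1 := by
    rw [Finset.sum_add_distrib, ← Finset.mul_sum, hw₁, hμ, mul_zero, add_zero]
  convert (convex_convexHull ℝ (range p)).sum_mem (fun i _ => hε i) hsum
    (fun i _ => subset_convexHull ℝ _ (mem_range_self i)) using 1
  simp only [add_smul, mul_smul, Finset.sum_add_distrib, Finset.smul_sum]

theorem exists_sum_eq_zero_of_mem_span_range_sub {p : ι → E} {j : ι} {v : E}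
    (hv : v ∈ Submodule.span ℝ (range fun i => p i - p j)) :
    ∃ μ : ι → ℝ, ∑ i, μ i = 0 ∧ ∑ i, μ i • p i = v := by
  classical
  obtain ⟨a, rfl⟩ := (Submodule.mem_span_range_iff_exists_fun ℝ).1 hv
  refine ⟨a - Pi.single j (∑ i, a i), by simp, ?_⟩
  simp [sub_smul, smul_sub, Finset.sum_sub_distrib, ← Finset.sum_smul]

theorem exists_mem_convexHull_forall_mem_span_sub [Nonempty ι] (p : ι → E) (j : ι) :
    ∃ c ∈ convexHull ℝ (range p), ∀ v ∈ Submodule.span ℝ (range fun i => p i - p j),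
      ∃ ε : ℝ, 0 < ε ∧ c + ε • v ∈ convexHull ℝ (range p) := by
  have hw : ∀ _i : ι, (0 : ℝ) < (Fintype.card ι : ℝ)⁻¹ := fun _ => by positivity
  have hw₁ : ∑ _i : ι, (Fintype.card ι : ℝ)⁻¹ = 1 := by simp
  refine ⟨∑ i, (Fintype.card ι : ℝ)⁻¹ • p i, (convex_convexHull ℝ _).sum_mem
    (fun i _ => (hw i).le) hw₁ (fun i _ => subset_convexHull ℝ _ (mem_range_self i)), ?_⟩
  intro v hv
  obtain ⟨μ, hμ, rfl⟩ := exists_sum_eq_zero_of_mem_span_range_sub hv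
  exact exists_pos_add_smul_mem_convexHull p hw hw₁ hμ

end Simplex

theorem Submodule.ker_orthogonalProjectionOnto_orthogonal {𝕜 E : Type*} [RCLike 𝕜]
    [NormedAddCommGroup E] [InnerProductSpace 𝕜 E] (K : Submodule 𝕜 E)
    [K.HasOrthogonalProjection] :
    LinearMap.ker (Kᗮ.orthogonalProjectionOnto : E →ₗ[𝕜] Kᗮ) = K := by
  ext v
  rw [LinearMap.mem_ker, ContinuousLinearMap.coe_coe, orthogonalProjectionOnto_eq_zero_iff,
    orthogonal_orthogonal]

theorem AffineIndependent.mem_of_mem_affineSpan {k V P : Type*} [Ring k] [Nontrivial k]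
    [AddCommGroup V] [Module k V] [AddTorsor V P] {s : Set P}
    (hs : AffineIndependent k ((↑) : s → P)) {t : Set P} (hts : t ⊆ s) {z : P} (hz : z ∈ s)
    (h : z ∈ affineSpan k t) : z ∈ t := by
  have key := hs.mem_affineSpan_iff ⟨z, hz⟩ ((↑) ⁻¹' t)
  rw [Subtype.image_preimage_coe, inter_eq_right.2 hts] at key
  exact key.1 h

theorem mem_range_of_mem_affineSpan_of_affineIndependent {k V P ι : Type*} [Ring k]
    [Nontrivial k] [AddCommGroup V] [Module k V] [AddTorsor V P] [Fintype ι] {Y : Finset P} {n : ℕ}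
    (hY : ∀ s : Finset P, ↑s ⊆ (Y : Set P) → s.card ≤ n → AffineIndependent k ((↑) : s → P))
    (hn : Fintype.card ι + 1 ≤ n) {y : ι → P} (hyY : range y ⊆ Y) {z : P} (hz : z ∈ Y)
    (h : z ∈ affineSpan k (range y)) : z ∈ range y := by
  classical
  have hs : ↑(insert z (Finset.univ.image y)) ⊆ (Y : Set P) := by
    rw [Finset.coe_insert, Finset.coe_image, Finset.coe_univ, image_univ]
    exact insert_subset hz hyY
  have hcard : (insert z (Finset.univ.image y)).card ≤ n := by
    have := Finset.card_insert_le z (Finset.univ.image y)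
    have := Finset.card_image_le (s := Finset.univ) (f := y)
    rw [Finset.card_univ] at this
    omega
  exact (hY _ hs hcard).mem_of_mem_affineSpan (by simp) (by simp) h

theorem stmt_11_general {d k : ℕ} (hk : k + 1 ≤ d) (Y : Finset (EuclideanSpace ℝ (Fin d)))
    (hgp : ∀ s : Finset (EuclideanSpace ℝ (Fin d)), ↑s ⊆ (Y : Set (EuclideanSpace ℝ (Fin d))) →
      s.card ≤ d + 1 → AffineIndependent ℝ ((↑) : s → EuclideanSpace ℝ (Fin d)))
    (y : Fin (k + 1) → EuclideanSpace ℝ (Fin d))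
    (hyY : ∀ i, y i ∈ Y) :
    IsExtreme ℝ (convexHull ℝ (Y : Set (EuclideanSpace ℝ (Fin d)))) (convexHull ℝ (Set.range y)) ↔
      Submodule.orthogonalProjectionOnto (Submodule.span ℝ (Set.range fun i => y i - y 0))ᗮ (y 0) ∈
        Set.extremePoints ℝ (convexHull ℝ
          ((fun z => Submodule.orthogonalProjectionOnto (Submodule.span ℝ (Set.range fun i => y i - y 0))ᗮ z) ''
            (Y : Set (EuclideanSpace ℝ (Fin d))))) := by
  set H := Submodule.span ℝ (Set.range fun i => y i - y 0)
  set f : EuclideanSpace ℝ (Fin d) →ₗ[ℝ] Hᗮ := Hᗮ.orthogonalProjectionOnto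
  have hker : LinearMap.ker f = H := H.ker_orthogonalProjectionOnto_orthogonal
  have hfiber : ∀ x, f x = f (y 0) ↔ x ∈ affineSpan ℝ (range y) := fun x => by
    rw [← AffineSubspace.vsub_right_mem_direction_iff_mem (mem_affineSpan ℝ (mem_range_self 0)),
      direction_affineSpan, vectorSpan_range_eq_span_range_vsub_right ℝ y 0, ← f.sub_mem_ker_iff,
      hker]
    rfl
  have hΔ : ∀ x ∈ convexHull ℝ (range y), f x = f (y 0) := fun x hx =>
    (hfiber x).2 (convexHull_subset_affineSpan _ hx)
  have hΔY : range y ⊆ Y := range_subset_iff.2 hyY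
  change _ ↔ f (y 0) ∈ (convexHull ℝ (f '' Y)).extremePoints ℝ
  rw [← f.image_convexHull]
  constructor
  · intro hface
    obtain ⟨c, hc, hcore⟩ := exists_mem_convexHull_forall_mem_span_sub y 0
    rw [← hΔ c hc]
    exact mem_extremePoints_image_of_isExtreme f (convex_convexHull ℝ _) hface hc
      (fun x hx => (hΔ x hx).trans (hΔ c hc).symm) fun v hv => hcore v (hker.le hv)
  · intro hext
    have hF := isExtreme_inter_preimage_of_mem_extremePoints f hext
    suffices hΔF : convexHull ℝ (range y) = convexHull ℝ Y ∩ f ⁻¹' {f (y 0)} by rwa [hΔF]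
    refine Subset.antisymm (fun x hx => mem_inter (convexHull_mono hΔY hx) (hΔ x hx)) ?_
    refine hF.subset_convexHull_inter.trans (convexHull_mono ?_)
    rintro z ⟨hzY, -, hz⟩
    exact mem_range_of_mem_affineSpan_of_affineIndependent hgp (by simpa using hk) hΔY hzY
      ((hfiber z).1 hz)

theorem stmt_11 {d k : ℕ} (hk : k + 1 ≤ d) (Y : Finset (EuclideanSpace ℝ (Fin d)))
    (hcard : d + 1 ≤ Y.card)
    (hgp : ∀ s : Finset (EuclideanSpace ℝ (Fin d)), ↑s ⊆ (Y : Set (EuclideanSpace ℝ (Fin d))) →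
      s.card ≤ d + 1 → AffineIndependent ℝ ((↑) : s → EuclideanSpace ℝ (Fin d)))
    (y : Fin (k + 1) → EuclideanSpace ℝ (Fin d)) (hyinj : Function.Injective y)
    (hyY : ∀ i, y i ∈ Y) :
    IsExtreme ℝ (convexHull ℝ (Y : Set (EuclideanSpace ℝ (Fin d)))) (convexHull ℝ (Set.range y)) ↔
      Submodule.orthogonalProjectionOnto (Submodule.span ℝ (Set.range fun i => y i - y 0))ᗮ (y 0) ∈
        Set.extremePoints ℝ (convexHull ℝ
          ((fun z => Submodule.orthogonalProjectionOnto (Submodule.span ℝ (Set.range fun i => y i - y 0))ᗮ z) ''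
            (Y : Set (EuclideanSpace ℝ (Fin d))))) :=
  stmt_11_general hk Y hgp y hyY
end

section
/- Let Y = {y_0, …, y_m} ⊆ R^d. A point x in the convex hull P of Y lies on the boundary of P if and only if x has a unique representation as a convex combination x = Σ w_i y_i (w_i ≥ 0, Σ w_i = 1) and this representation has at most d nonzero coefficients, assuming Y is in general position. -/
/-!
At a boundary point `x` of `P` a supporting functional `f` (with `f ≤ f x` on `P`) forces every
convex representation of `x` to put weight only on the vertices in the hyperplane `f = f x`. In
general position at most `d` vertices lie in a hyperplane, and these are affinely independent, so
the representation is unique and has at most `d` nonzero weights. Conversely, if `x` is interior,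
then for each vertex `y j` the point `x` lies strictly between `y j` and a point of `P`, which gives
a representation of `x` with positive weight at `y j`; uniqueness then makes all `m + 1` weights
nonzero, whereas `m + 1 ≥ d + 1` because `Y` affinely spans `ℝ^d`.
-/

open Set Finset Module

section ConvexHull

variable {𝕜 E ι : Type*} [Field 𝕜] [LinearOrder 𝕜] [IsStrictOrderedRing 𝕜]
  [AddCommGroup E] [Module 𝕜 E] [Fintype ι]

theorem convexHull_range_eq_image_stdSimplex (p : ι → E) :
    convexHull 𝕜 (range p) = Fintype.linearCombination 𝕜 p '' stdSimplex 𝕜 ι := by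
  classical
  refine Subset.antisymm (convexHull_min ?_ ((convex_stdSimplex 𝕜 ι).linear_image _)) ?_
  · rintro _ ⟨i, rfl⟩
    exact ⟨Pi.single i 1, single_mem_stdSimplex 𝕜 i, by simp⟩
  · rintro _ ⟨w, hw, rfl⟩
    exact mem_convexHull_of_exists_fintype w p hw.1 hw.2 mem_range_self
      (Fintype.linearCombination_apply ..).symm

theorem mem_convexHull_range_iff_exists_stdSimplex {p : ι → E} {x : E} :
    x ∈ convexHull 𝕜 (range p) ↔ ∃ w ∈ stdSimplex 𝕜 ι, ∑ i, w i • p i = x := by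
  simp [convexHull_range_eq_image_stdSimplex, Fintype.linearCombination_apply]

theorem apply_eq_of_sum_smul_eq_of_forall_le {f : E →ₗ[𝕜] 𝕜} {p : ι → E} {x : E}
    (hf : ∀ i, f (p i) ≤ f x) {w : ι → 𝕜} (hw : w ∈ stdSimplex 𝕜 ι) (hwx : ∑ i, w i • p i = x)
    {i : ι} (hi : w i ≠ 0) : f (p i) = f x := by
  have hsum : ∑ j, w j * (f x - f (p j)) = 0 :=
    calc ∑ j, w j * (f x - f (p j)) = (∑ j, w j) * f x - f (∑ j, w j • p j) := by
          simp [mul_sub, Finset.sum_sub_distrib, Finset.sum_mul]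
      _ = 0 := by rw [hw.2, hwx, one_mul, sub_self]
  have hterm := (Finset.sum_eq_zero_iff_of_nonneg fun j _ ↦
    mul_nonneg (hw.1 j) (sub_nonneg.2 (hf j))).1 hsum i (mem_univ i)
  linarith [(mul_eq_zero.1 hterm).resolve_left hi]

variable [TopologicalSpace E] [IsTopologicalAddGroup E] [TopologicalSpace 𝕜] [OrderTopology 𝕜]
  [ContinuousSMul 𝕜 E]

theorem exists_mem_openSegment_of_mem_nhds {s : Set E} {x : E} (hs : s ∈ nhds x) (y : E) :
    ∃ z ∈ s, x ∈ openSegment 𝕜 y z := by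
  have h := AffineMap.lineMap_apply_one (k := 𝕜) y x
  obtain ⟨t, ht1, ht⟩ :=
    (AffineMap.lineMap_continuous.tendsto' _ _ h |>.eventually_mem hs).exists_gt
  refine ⟨_, ht, ?_⟩
  nth_rw 1 [← AffineMap.lineMap_apply_zero (k := 𝕜) y x, ← image_openSegment]
  exact ⟨1, Ioo_subset_openSegment ⟨zero_lt_one, ht1⟩, h⟩

theorem exists_stdSimplex_pos_of_mem_interior_convexHull {p : ι → E} {x : E}
    (hx : x ∈ interior (convexHull 𝕜 (range p))) (j : ι) :
    ∃ w ∈ stdSimplex 𝕜 ι, ∑ i, w i • p i = x ∧ 0 < w j := by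
  classical
  obtain ⟨z, hz, a, b, ha, hb, hab, rfl⟩ :=
    exists_mem_openSegment_of_mem_nhds (𝕜 := 𝕜) (mem_interior_iff_mem_nhds.1 hx) (p j)
  obtain ⟨v, hv, rfl⟩ := mem_convexHull_range_iff_exists_stdSimplex.1 hz
  refine ⟨a • Pi.single j 1 + b • v, convex_stdSimplex 𝕜 ι (single_mem_stdSimplex 𝕜 j) hv
    ha.le hb.le hab, ?_, ?_⟩
  · simp [add_smul, mul_smul, Finset.sum_add_distrib, Finset.smul_sum, Pi.single_apply]
  · simpa using add_pos_of_pos_of_nonneg ha (mul_nonneg hb.le (hv.1 j))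

end ConvexHull

theorem exists_ne_zero_forall_le_of_notMem_interior {E : Type*} [AddCommGroup E] [Module ℝ E]
    [TopologicalSpace E] [IsTopologicalAddGroup E] [ContinuousSMul ℝ E] [LocallyConvexSpace ℝ E]
    {s : Set E} (hs : Convex ℝ s) (hint : (interior s).Nonempty) {x : E} (hx : x ∉ interior s) :
    ∃ f : StrongDual ℝ E, f ≠ 0 ∧ ∀ c ∈ s, f c ≤ f x := by
  obtain ⟨f, u, hf, hfs, hfx⟩ := geometric_hahn_banach_of_nonempty_interior hs
    (convex_singleton x) (disjoint_singleton_right.2 hx) hint (singleton_nonempty x)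
  exact ⟨f, hf, fun c hc ↦ (hfs c hc).trans (hfx x rfl)⟩

section AffineIndependent

variable {k V ι : Type*} [Field k] [AddCommGroup V] [Module k V] [Fintype ι]

theorem AffineIndependent.eq_of_sum_eq_sum_of_support_subset {p : ι → V} {T : Finset ι}
    (hT : AffineIndependent k (fun i : T ↦ p i)) {w₁ w₂ : ι → k} (h₁ : ∀ i, w₁ i ≠ 0 → i ∈ T)
    (h₂ : ∀ i, w₂ i ≠ 0 → i ∈ T) (hw : ∑ i, w₁ i = ∑ i, w₂ i)
    (hwp : ∑ i, w₁ i • p i = ∑ i, w₂ i • p i) : w₁ = w₂ := by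
  funext i
  by_cases hi : i ∈ T
  · refine hT.eq_of_sum_eq_sum (s := univ) (w₁ := fun j : T ↦ w₁ j) (w₂ := fun j : T ↦ w₂ j)
      ?_ ?_ ⟨i, hi⟩ (mem_univ _)
    · rwa [sum_coe_sort T w₁, sum_coe_sort T w₂, Fintype.sum_subset h₁, Fintype.sum_subset h₂]
    · rwa [sum_coe_sort T (fun j ↦ w₁ j • p j), sum_coe_sort T (fun j ↦ w₂ j • p j),
        Fintype.sum_subset fun j h ↦ h₁ j (left_ne_zero_of_smul h),
        Fintype.sum_subset fun j h ↦ h₂ j (left_ne_zero_of_smul h)]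
  · rw [of_not_not (mt (h₁ i) hi), of_not_not (mt (h₂ i) hi)]

theorem AffineIndependent.card_le_finrank_of_apply_eq [FiniteDimensional k V] {p : ι → V}
    (hp : AffineIndependent k p) {f : Dual k V} (hf : f ≠ 0) {c : k} (hfp : ∀ i, f (p i) = c) :
    Fintype.card ι ≤ finrank k V := by
  have hker : vectorSpan k (range p) ≤ LinearMap.ker f := by
    rw [vectorSpan_def, Submodule.span_le]
    rintro _ ⟨_, ⟨i, rfl⟩, _, ⟨j, rfl⟩, rfl⟩
    simp [hfp]
  have := Submodule.finrank_mono hker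
  have := f.finrank_ker_add_one_of_ne_zero hf
  have := hp.card_le_finrank_succ
  omega

theorem card_filter_apply_eq_le [FiniteDimensional k V] [DecidableEq k] {p : ι → V} {n : ℕ}
    (hn : finrank k V ≤ n)
    (hgp : ∀ s : Finset ι, s.card = n + 1 → AffineIndependent k (fun i : s ↦ p i))
    {f : Dual k V} (hf : f ≠ 0) (c : k) : #{i | f (p i) = c} ≤ n := by
  by_contra! h
  obtain ⟨s, hs, hcard⟩ := exists_subset_card_eq (s := {i | f (p i) = c}) h
  have := (hgp s hcard).card_le_finrank_of_apply_eq hf fun i ↦ (mem_filter.1 (hs i.2)).2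
  rw [Fintype.card_coe] at this
  omega

theorem finrank_add_one_le_card_of_affineSpan_eq_top [Nonempty ι] {p : ι → V}
    (hp : affineSpan k (range p) = ⊤) : finrank k V + 1 ≤ Fintype.card ι := by
  have h := finrank_vectorSpan_range_add_one_le k p
  rwa [AffineSubspace.vectorSpan_eq_top_of_affineSpan_eq_top k V V hp, finrank_top] at h

end AffineIndependent

section GeneralPosition

variable {E ι : Type*} [NormedAddCommGroup E] [NormedSpace ℝ E] [Fintype ι] {p : ι → E} {x : E}

open Classical in
theorem exists_unique_weights_of_mem_frontier_convexHull [FiniteDimensional ℝ E] {n : ℕ}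
    (hn : finrank ℝ E ≤ n)
    (hgp : ∀ s : Finset ι, s.card ≤ n + 1 → AffineIndependent ℝ (fun i : s ↦ p i))
    (hp : affineSpan ℝ (range p) = ⊤) (hx : x ∈ frontier (convexHull ℝ (range p))) :
    ∃ w ∈ stdSimplex ℝ ι, ∑ i, w i • p i = x ∧ #{i | w i ≠ 0} ≤ n ∧
      ∀ w' ∈ stdSimplex ℝ ι, ∑ i, w' i • p i = x → w' = w := by
  have hconv := convex_convexHull ℝ (range p)
  have hint : (interior (convexHull ℝ (range p))).Nonempty :=
    hconv.interior_nonempty_iff_affineSpan_eq_top.2 (by rwa [affineSpan_convexHull])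
  rw [((finite_range p).isClosed_convexHull ℝ).frontier_eq] at hx
  obtain ⟨f, hf, hfx⟩ := exists_ne_zero_forall_le_of_notMem_interior hconv hint hx.2
  have hf' : (f : E →ₗ[ℝ] ℝ) ≠ 0 := by
    rwa [Ne, ← ContinuousLinearMap.toLinearMap_zero, ContinuousLinearMap.coe_inj]
  have hsupp : ∀ w ∈ stdSimplex ℝ ι, ∑ i, w i • p i = x →
      ∀ i, w i ≠ 0 → i ∈ ({i | f (p i) = f x} : Finset ι) := fun w hw hwx i h ↦
    mem_filter.2 ⟨mem_univ i, apply_eq_of_sum_smul_eq_of_forall_le (f := (f : E →ₗ[ℝ] ℝ))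
      (fun j ↦ hfx _ (subset_convexHull ℝ _ (mem_range_self j))) hw hwx h⟩
  have hT : #{i | f (p i) = f x} ≤ n :=
    card_filter_apply_eq_le hn (fun s hs ↦ hgp s hs.le) hf' (f x)
  obtain ⟨w, hw, hwx⟩ := mem_convexHull_range_iff_exists_stdSimplex.1 hx.1
  refine ⟨w, hw, hwx,
    (Finset.card_le_card fun i hi ↦ hsupp w hw hwx i (mem_filter.1 hi).2).trans hT,
    fun w' hw' hw'x ↦ ?_⟩
  exact (hgp _ (by omega)).eq_of_sum_eq_sum_of_support_subset (hsupp w' hw' hw'x)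
    (hsupp w hw hwx) (by rw [hw'.2, hw.2]) (by rw [hw'x, hwx])

open Classical in
theorem mem_frontier_convexHull_of_unique_weights [Nonempty ι]
    (hp : affineSpan ℝ (range p) = ⊤) {w : ι → ℝ} (hw : w ∈ stdSimplex ℝ ι)
    (hwx : ∑ i, w i • p i = x) (hcard : #{i | w i ≠ 0} ≤ finrank ℝ E)
    (huniq : ∀ w' ∈ stdSimplex ℝ ι, ∑ i, w' i • p i = x → w' = w) :
    x ∈ frontier (convexHull ℝ (range p)) := by
  rw [((finite_range p).isClosed_convexHull ℝ).frontier_eq]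
  refine ⟨mem_convexHull_range_iff_exists_stdSimplex.2 ⟨w, hw, hwx⟩, fun hxint ↦ ?_⟩
  have hpos : ∀ j, w j ≠ 0 := fun j ↦ by
    obtain ⟨w', hw', hw'x, hj⟩ := exists_stdSimplex_pos_of_mem_interior_convexHull hxint j
    exact huniq w' hw' hw'x ▸ hj.ne'
  have := finrank_add_one_le_card_of_affineSpan_eq_top hp
  simp only [hpos, ne_eq, not_false_eq_true, filter_true, card_univ] at hcard
  omega

end GeneralPosition

open Classical in
theorem stmt_12_general {d m : ℕ} (y : Fin (m + 1) → EuclideanSpace ℝ (Fin d))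
    (hgp : ∀ s : Finset (Fin (m + 1)), s.card ≤ d + 1 →
      AffineIndependent ℝ (fun i : s => y i))
    (hfull : affineSpan ℝ (Set.range y) = ⊤)
    (x : EuclideanSpace ℝ (Fin d)) :
    x ∈ frontier (convexHull ℝ (Set.range y)) ↔
      ∃ w : Fin (m + 1) → ℝ, (∀ i, 0 ≤ w i) ∧ (∑ i, w i) = 1 ∧ (∑ i, w i • y i) = x ∧
        (Finset.univ.filter fun i => w i ≠ 0).card ≤ d ∧
        ∀ w' : Fin (m + 1) → ℝ, (∀ i, 0 ≤ w' i) → (∑ i, w' i) = 1 →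
          (∑ i, w' i • y i) = x → w' = w := by
  constructor
  · intro hx
    obtain ⟨w, hw, hwx, hcard, huniq⟩ :=
      exists_unique_weights_of_mem_frontier_convexHull (by simp) hgp hfull hx
    exact ⟨w, hw.1, hw.2, hwx, hcard, fun w' hw'₀ hw'₁ ↦ huniq w' ⟨hw'₀, hw'₁⟩⟩
  · rintro ⟨w, hw₀, hw₁, hwx, hcard, huniq⟩
    exact mem_frontier_convexHull_of_unique_weights hfull ⟨hw₀, hw₁⟩ hwx (by simpa using hcard)
      fun w' hw' ↦ huniq w' hw'.1 hw'.2

open Classical in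
theorem stmt_12 {d m : ℕ} (y : Fin (m + 1) → EuclideanSpace ℝ (Fin d))
    (hinj : Function.Injective y)
    (hgp : ∀ s : Finset (Fin (m + 1)), s.card ≤ d + 1 →
      AffineIndependent ℝ (fun i : s => y i))
    (hfull : affineSpan ℝ (Set.range y) = ⊤)
    (x : EuclideanSpace ℝ (Fin d)) (hx : x ∈ convexHull ℝ (Set.range y)) :
    x ∈ frontier (convexHull ℝ (Set.range y)) ↔
      ∃ w : Fin (m + 1) → ℝ, (∀ i, 0 ≤ w i) ∧ (∑ i, w i) = 1 ∧ (∑ i, w i • y i) = x ∧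
        (Finset.univ.filter fun i => w i ≠ 0).card ≤ d ∧
        ∀ w' : Fin (m + 1) → ℝ, (∀ i, 0 ≤ w' i) → (∑ i, w' i) = 1 →
          (∑ i, w' i • y i) = x → w' = w :=
  stmt_12_general y hgp hfull x
end

section
/- For every finite simple graph G = (V, E) with |V| = n ≥ 2 there exist real numbers 0 < α < β and a map f : V → R^{n−1} such that for all distinct u, v ∈ V: dist(f(u), f(v)) = α if (u,v) ∉ E and dist(f(u), f(v)) = β if (u,v) ∈ E. -/
/-!
For `K` at least every degree, `K • 1 - A(G)` is a nonnegative diagonal matrix plus the Laplacian,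
hence positive semidefinite, hence the Gram matrix of vectors `x v` with `‖x v‖² = K` and
`⟪x u, x v⟫ = -[u ~ v]`, so that `‖x u - x v‖² = 2K + 2[u ~ v]`. The `n` points `x v` span an
affine subspace of dimension at most `n - 1`, which embeds isometrically into `ℝⁿ⁻¹`.
-/

open Matrix Module
open scoped InnerProductSpace MatrixOrder ComplexOrder

theorem Matrix.PosSemidef.exists_gram_eq {𝕜 n : Type*} [RCLike 𝕜] [Fintype n]
    {M : Matrix n n 𝕜} (hM : M.PosSemidef) : ∃ x : n → EuclideanSpace 𝕜 n, gram 𝕜 x = M := by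
  classical
  obtain ⟨B, rfl⟩ := CStarAlgebra.nonneg_iff_eq_star_mul_self.mp hM.nonneg
  refine ⟨fun i => WithLp.toLp 2 (fun k => B k i), ?_⟩
  ext i j
  simp [gram_apply, EuclideanSpace.inner_eq_star_dotProduct, mul_apply, dotProduct, mul_comm]

theorem exists_linearIsometry_of_finrank_le {𝕜 E F : Type*} [RCLike 𝕜]
    [NormedAddCommGroup E] [InnerProductSpace 𝕜 E] [FiniteDimensional 𝕜 E]
    [NormedAddCommGroup F] [InnerProductSpace 𝕜 F] [FiniteDimensional 𝕜 F]
    (h : finrank 𝕜 E ≤ finrank 𝕜 F) : Nonempty (E →ₗᵢ[𝕜] F) := by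
  let b := stdOrthonormalBasis 𝕜 E
  let c := stdOrthonormalBasis 𝕜 F ∘ Fin.castLE h
  have hc : Orthonormal 𝕜 c :=
    (stdOrthonormalBasis 𝕜 F).orthonormal.comp _ (Fin.castLE_injective h)
  have hbc : ⇑(b.toBasis.constr 𝕜 c) ∘ b.toBasis = c := funext (b.toBasis.constr_basis 𝕜 c)
  exact ⟨(b.toBasis.constr 𝕜 c).isometryOfOrthonormal (by simp [b.orthonormal]) (hbc ▸ hc)⟩

theorem exists_dist_eq_of_card_le_finrank_add_one {ι E P F : Type*} [Fintype ι] [Nonempty ι]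
    [NormedAddCommGroup E] [InnerProductSpace ℝ E] [MetricSpace P] [NormedAddTorsor E P]
    [NormedAddCommGroup F] [InnerProductSpace ℝ F] [FiniteDimensional ℝ F]
    (p : ι → P) (hcard : Fintype.card ι ≤ finrank ℝ F + 1) :
    ∃ q : ι → F, ∀ i j, dist (q i) (q j) = dist (p i) (p j) := by
  obtain ⟨L⟩ : Nonempty (vectorSpan ℝ (Set.range p) →ₗᵢ[ℝ] F) :=
    exists_linearIsometry_of_finrank_le <| by
      have := finrank_vectorSpan_range_add_one_le ℝ p
      omega
  obtain ⟨i₀⟩ := ‹Nonempty ι›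
  refine ⟨fun i => L ⟨p i -ᵥ p i₀, vsub_mem_vectorSpan ℝ ⟨i, rfl⟩ ⟨i₀, rfl⟩⟩, fun i j => ?_⟩
  rw [dist_eq_norm, ← map_sub, L.norm_map, dist_eq_norm_vsub E]
  simp

theorem SimpleGraph.posSemidef_diagonal_sub_adjMatrix {V : Type*} [Fintype V] [DecidableEq V]
    (G : SimpleGraph V) [DecidableRel G.Adj] {K : ℝ} (hK : ∀ v, (G.degree v : ℝ) ≤ K) :
    (diagonal (fun _ => K) - G.adjMatrix ℝ).PosSemidef := by
  have : diagonal (fun _ => K) - G.adjMatrix ℝ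
      = diagonal (fun v => K - G.degree v) + G.lapMatrix ℝ := by
    rw [SimpleGraph.lapMatrix, SimpleGraph.degMatrix, ← diagonal_sub]; abel
  rw [this]
  exact (posSemidef_diagonal_iff.2 fun v => sub_nonneg.2 (hK v)).add (G.posSemidef_lapMatrix ℝ)

theorem SimpleGraph.exists_norm_sub_sq_eq {V : Type*} [Fintype V] [DecidableEq V]
    (G : SimpleGraph V) [DecidableRel G.Adj] {K : ℝ} (hK : ∀ v, (G.degree v : ℝ) ≤ K) :
    ∃ x : V → EuclideanSpace ℝ V, ∀ u v, u ≠ v →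
      ‖x u - x v‖ ^ 2 = 2 * K + 2 * G.adjMatrix ℝ u v := by
  obtain ⟨x, hx⟩ := (G.posSemidef_diagonal_sub_adjMatrix hK).exists_gram_eq
  have hinner (u v : V) :
      ⟪x u, x v⟫_ℝ = (diagonal (fun _ => K) - G.adjMatrix ℝ : Matrix V V ℝ) u v :=
    congrFun₂ hx u v
  refine ⟨x, fun u v huv => ?_⟩
  rw [norm_sub_sq_real, ← real_inner_self_eq_norm_sq, ← real_inner_self_eq_norm_sq,
    hinner, hinner, hinner]
  simp [diagonal_apply_ne _ huv]
  ring

theorem stmt_14 {V : Type*} [Fintype V] [DecidableEq V] (G : SimpleGraph V)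
    [DecidableRel G.Adj] (hn : 2 ≤ Fintype.card V) :
    ∃ (α β : ℝ) (f : V → EuclideanSpace ℝ (Fin (Fintype.card V - 1))),
      0 < α ∧ α < β ∧
      ∀ u v : V, u ≠ v →
        dist (f u) (f v) = if G.Adj u v then β else α := by
  obtain ⟨x, hx⟩ := G.exists_norm_sub_sq_eq (K := Fintype.card V) fun v => by
    exact_mod_cast (G.degree_lt_card_verts v).le
  have : Nonempty V := Fintype.card_pos_iff.mp (by omega)
  obtain ⟨f, hf⟩ := exists_dist_eq_of_card_le_finrank_add_one
    (F := EuclideanSpace ℝ (Fin (Fintype.card V - 1))) x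
    (by rw [finrank_euclideanSpace_fin]; omega)
  refine ⟨√(2 * Fintype.card V), √(2 * Fintype.card V + 2), f, by positivity,
    by gcongr; linarith, fun u v huv => ?_⟩
  rw [hf, dist_eq_norm, ← Real.sqrt_sq (norm_nonneg _), hx u v huv]
  split_ifs with h <;> simp [h]
end

section
/- Let Δ and Δ' be two regular k-simplices in R^k with unit edge length sharing a common (k−1)-dimensional face F (with their apexes on opposite sides of the hyperplane containing F). Then the distance between the two apexes is strictly greater than 1. -/
/-!
If `x` is at distance `1` from every vertex `pᵢ` of a unit simplex, the vectors `x - pᵢ` have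
pairwise inner products `1/2`, so for every affine combination `c = ∑ wᵢ pᵢ` we get
`‖x - c‖² = (1 + ∑ wᵢ²) / 2 > 1/4`. As the apexes lie strictly on opposite sides of the span of
the common facet, the segment between them meets it at such a point `c`, and
`dist a b = dist a c + dist c b > 1/2 + 1/2`.
-/

open Finset

variable {V ι : Type*} [NormedAddCommGroup V] [InnerProductSpace ℝ V] [Fintype ι]

lemma inner_sub_sub_eq_half_of_dist_eq_one {x p q : V} (hp : dist x p = 1) (hq : dist x q = 1)
    (hpq : dist p q = 1) : inner ℝ (x - p) (x - q) = 1 / 2 := by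
  rw [dist_eq_norm] at hp hq hpq
  have h := norm_sub_sq_real (x - p) (x - q)
  rw [sub_sub_sub_cancel_left, norm_sub_rev, hp, hq, hpq] at h
  linarith

lemma norm_sub_affineCombination_sq {x : V} {p : ι → V}
    (hp : Pairwise fun i j ↦ dist (p i) (p j) = 1) (hx : ∀ i, dist x (p i) = 1) {w : ι → ℝ} (hw : ∑ i, w i = 1) :
    ‖x - univ.affineCombination ℝ p w‖ ^ 2 = (1 + ∑ i, w i ^ 2) / 2 := by
  classical
  have hinner : ∀ i j, inner ℝ (x - p i) (x - p j) = 1 / 2 + if i = j then 1 / 2 else 0 := by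
    intro i j
    split_ifs with h
    · subst h
      rw [real_inner_self_eq_norm_sq, ← dist_eq_norm, hx]; norm_num
    · rw [inner_sub_sub_eq_half_of_dist_eq_one (hx i) (hx j) (hp h), add_zero]
  have hdiff : x - univ.affineCombination ℝ p w = ∑ i, w i • (x - p i) := by
    simp_rw [univ.affineCombination_eq_linear_combination p w hw, smul_sub, sum_sub_distrib,
      ← sum_smul, hw, one_smul]
  rw [← real_inner_self_eq_norm_sq, hdiff, sum_inner]
  simp_rw [inner_sum, real_inner_smul_left, real_inner_smul_right, hinner, mul_add, mul_ite,
    mul_zero, sum_add_distrib, sum_ite_eq, mem_univ, if_true, ← mul_sum, ← sum_mul, hw,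
    ← mul_assoc, ← sq, ← sum_mul]
  ring

lemma half_lt_dist_affineCombination {x : V} {p : ι → V}
    (hp : Pairwise fun i j ↦ dist (p i) (p j) = 1) (hx : ∀ i, dist x (p i) = 1) {w : ι → ℝ}
    (hw : ∑ i, w i = 1) : 1 / 2 < dist x (univ.affineCombination ℝ p w) := by
  have hsq : (1 / 2 : ℝ) ^ 2 < dist x (univ.affineCombination ℝ p w) ^ 2 := by
    rw [dist_eq_norm, norm_sub_affineCombination_sq hp hx hw]
    linarith [sum_nonneg fun i (_ : i ∈ univ) ↦ sq_nonneg (w i)]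
  exact lt_of_pow_lt_pow_left₀ 2 dist_nonneg hsq

theorem stmt_16_general {k : ℕ} (v : Fin k → EuclideanSpace ℝ (Fin k))
    (a b : EuclideanSpace ℝ (Fin k))
    (hreg : ∀ i j, i ≠ j → dist (v i) (v j) = 1)
    (ha : ∀ i, dist a (v i) = 1) (hb : ∀ i, dist b (v i) = 1)
    (hopp : (affineSpan ℝ (Set.range v)).SOppSide a b) :
    1 < dist a b := by
  obtain ⟨p, hp, hapb⟩ := hopp.exists_sbtw
  obtain ⟨w, hw, rfl⟩ := eq_affineCombination_of_mem_affineSpan_of_fintype hp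
  have hap := half_lt_dist_affineCombination (fun i j ↦ hreg i j) ha hw
  have hbp := half_lt_dist_affineCombination (fun i j ↦ hreg i j) hb hw
  rw [← hapb.wbtw.dist_add_dist, dist_comm _ b]
  linarith

theorem stmt_16 {k : ℕ} (hk : 1 ≤ k) (v : Fin k → EuclideanSpace ℝ (Fin k))
    (a b : EuclideanSpace ℝ (Fin k))
    (hreg : ∀ i j, i ≠ j → dist (v i) (v j) = 1)
    (ha : ∀ i, dist a (v i) = 1) (hb : ∀ i, dist b (v i) = 1)
    (hopp : (affineSpan ℝ (Set.range v)).SOppSide a b) :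
    1 < dist a b :=
  stmt_16_general v a b hreg ha hb hopp
end
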